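/- arXiv:0912.3030 — 4 statements merged into one kernel-verified Lean document; each statement's English description precedes it below -/
import Mathlib

section
/- Jacobi triple product: for 0 < |q| < 1 and z ∈ ℂ \ {0}, Σ_{k∈ℤ} q^{k²} z^k = (q²; q²)_∞ (-zq; q²)_∞ (-z^{-1}q; q²)_∞, where (a;q)_∞ = ∏_{k=0}^∞ (1 - a q^k). -/
/-!
Finite form: the q-binomial theorem for `∏_{j<2n} (1 + x q^{2j})` at `x = z q^{1-2n}`, after
`z q^{-(2j+1)}` is pulled out of each of the first `n` factors, gives
`∏_{j<n} (1 + z q^{2j+1}) (1 + z⁻¹ q^{2j+1}) = ∑_{|m| ≤ n} [2n, n+m]_{q²} q^{m²} z^m`.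
As `n → ∞` the Gaussian binomial `[2n, n+m]_{q²} = (q²;q²)_{2n} / ((q²;q²)_{n+m} (q²;q²)_{n-m})`
tends to `1 / (q²;q²)_∞` and stays bounded uniformly in `n` and `m`, so dominated convergence
(Tannery's theorem) passes to the limit.
-/

open Finset Filter Topology

section GaussBinom

variable {R : Type*} [CommRing R] (w : R)

-- `(w; w)_n` in the notation of the statement
def qPochhammer (n : ℕ) : R := ∏ j ∈ range n, (1 - w * w ^ j)

def gaussBinom : ℕ → ℕ → R
  | _, 0 => 1
  | 0, _ + 1 => 0
  | n + 1, k + 1 => gaussBinom n k + w ^ (k + 1) * gaussBinom n (k + 1)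

@[simp]
lemma gaussBinom_zero_right (n : ℕ) : gaussBinom w n 0 = 1 := by
  cases n <;> rfl

lemma gaussBinom_succ_succ (n k : ℕ) :
    gaussBinom w (n + 1) (k + 1) = gaussBinom w n k + w ^ (k + 1) * gaussBinom w n (k + 1) :=
  rfl

lemma gaussBinom_eq_zero_of_lt {n k : ℕ} (h : n < k) : gaussBinom w n k = 0 := by
  induction n generalizing k with
  | zero => obtain ⟨k, rfl⟩ := Nat.exists_eq_add_of_lt h; rfl
  | succ n ih =>
    obtain ⟨k, rfl⟩ := Nat.exists_eq_succ_of_ne_zero (by omega : k ≠ 0)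
    rw [gaussBinom_succ_succ, ih (by omega), ih (by omega), mul_zero, add_zero]

@[simp]
lemma gaussBinom_self (n : ℕ) : gaussBinom w n n = 1 := by
  induction n with
  | zero => rfl
  | succ n ih =>
    rw [gaussBinom_succ_succ, ih, gaussBinom_eq_zero_of_lt w n.lt_succ_self, mul_zero, add_zero]

@[simp]
lemma qPochhammer_zero : qPochhammer w 0 = 1 := prod_range_zero _

lemma qPochhammer_succ (n : ℕ) : qPochhammer w (n + 1) = qPochhammer w n * (1 - w * w ^ n) :=
  prod_range_succ _ _

lemma gaussBinom_mul_qPochhammer_mul_qPochhammer (k l : ℕ) :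
    gaussBinom w (k + l) k * qPochhammer w k * qPochhammer w l = qPochhammer w (k + l) := by
  induction k generalizing l with
  | zero => simp
  | succ k ihk =>
    induction l with
    | zero => simp
    | succ l ihl =>
      have h₁ := ihk (l + 1)
      rw [← add_assoc, qPochhammer_succ w l] at h₁
      rw [add_right_comm, qPochhammer_succ w k] at ihl
      rw [show k + 1 + (l + 1) = k + l + 1 + 1 by ring, gaussBinom_succ_succ, qPochhammer_succ w k,
        qPochhammer_succ w l, qPochhammer_succ w (k + l + 1)]
      linear_combination (1 - w * w ^ k) * h₁ + w ^ (k + 1) * (1 - w * w ^ l) * ihl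

lemma prod_one_add_mul_pow_eq_sum_gaussBinom (x : R) (N : ℕ) :
    ∏ j ∈ range N, (1 + x * w ^ j) =
      ∑ k ∈ range (N + 1), w ^ k.choose 2 * gaussBinom w N k * x ^ k := by
  induction N generalizing x with
  | zero => simp
  | succ N ih =>
    set a : ℕ → R := fun k => w ^ k.choose 2 * gaussBinom w N k * (x * w) ^ k with ha
    have h_shift : ∑ k ∈ range (N + 1), a k = ∑ k ∈ range (N + 1), a (k + 1) + 1 := by
      rw [sum_range_succ' a, sum_range_succ (fun k => a (k + 1))]
      simp [a, gaussBinom_eq_zero_of_lt w (N.lt_succ_self)]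
    have h_pascal (k : ℕ) :
        w ^ (k + 1).choose 2 * gaussBinom w (N + 1) (k + 1) * x ^ (k + 1) =
          x * a k + a (k + 1) := by
      simp only [a, Nat.choose_succ_succ', Nat.choose_one_right, gaussBinom_succ_succ]
      ring
    rw [prod_range_succ', sum_range_succ' _ (N + 1), sum_congr rfl fun k _ => h_pascal k,
      sum_add_distrib, ← mul_sum]
    simp_rw [pow_succ', ← mul_assoc]
    rw [ih, ← ha]
    simp only [pow_zero, mul_one, Nat.choose_zero_succ, gaussBinom_zero_right]
    linear_combination h_shift

end GaussBinom

lemma two_mul_choose_two_add_self (k : ℕ) : 2 * k.choose 2 + k = k ^ 2 := by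
  induction k with
  | zero => rfl
  | succ k ih => rw [Nat.choose_succ_succ', Nat.choose_one_right]; linear_combination ih

lemma sum_range_id_eq_choose_two (n : ℕ) : ∑ i ∈ range n, i = n.choose 2 :=
  (sum_range_id n).trans (Nat.choose_two_right n).symm

section FiniteJacobi

variable {K : Type*} [Field K] {q : K} (z : K) (hq : q ≠ 0) (n : ℕ)
include hq

lemma sq_choose_two_mul_pow_eq_zpow (k : ℕ) :
    (q ^ 2) ^ k.choose 2 * (z * q ^ (1 - 2 * n : ℤ)) ^ k =
      q ^ (((k : ℤ) - n) ^ 2 - n ^ 2) * z ^ k := by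
  have hexp : ((2 * k.choose 2 : ℕ) : ℤ) + (1 - 2 * n) * k = ((k : ℤ) - n) ^ 2 - n ^ 2 := by
    have := congrArg (Nat.cast : ℕ → ℤ) (two_mul_choose_two_add_self k)
    push_cast at this ⊢
    linear_combination this
  rw [mul_pow, ← pow_mul, ← zpow_natCast, ← zpow_natCast (q ^ _), ← zpow_mul, ← hexp,
    zpow_add₀ hq]
  ring

lemma prod_one_add_mul_sq_pow_eq (hz : z ≠ 0) :
    ∏ j ∈ range (2 * n), (1 + z * q ^ (1 - 2 * n : ℤ) * (q ^ 2) ^ j) =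
      q ^ (-(n : ℤ) ^ 2) * z ^ n * ((∏ j ∈ range n, (1 + z * q * (q ^ 2) ^ j)) *
        ∏ j ∈ range n, (1 + z⁻¹ * q * (q ^ 2) ^ j)) := by
  set x := z * q ^ (1 - 2 * n : ℤ)
  have hx : x * (q ^ 2) ^ n = z * q := by
    rw [← pow_mul, ← zpow_natCast, mul_assoc, ← zpow_add₀ hq]
    push_cast
    rw [sub_add_cancel, zpow_one]
  have h_upper (j : ℕ) : 1 + x * (q ^ 2) ^ (n + j) = 1 + z * q * (q ^ 2) ^ j := by
    rw [pow_add, ← mul_assoc, hx]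
  have h_lower : ∀ j ∈ range n,
      1 + x * (q ^ 2) ^ (n - 1 - j) = x * (q ^ 2) ^ (n - 1 - j) * (1 + z⁻¹ * q * (q ^ 2) ^ j) := by
    intro j hj
    have hn : (q ^ 2) ^ (n - 1 - j) * (q ^ 2) ^ j * q ^ 2 = (q ^ 2) ^ n := by
      rw [← pow_add, ← pow_succ]; congr 1; rw [mem_range] at hj; omega
    have key : x * (q ^ 2) ^ (n - 1 - j) * (z⁻¹ * q * (q ^ 2) ^ j) = 1 := by
      calc _ = x * ((q ^ 2) ^ (n - 1 - j) * (q ^ 2) ^ j * q ^ 2) * z⁻¹ * q⁻¹ := by field_simp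
        _ = 1 := by rw [hn, hx]; field_simp
    linear_combination -key
  have h_pref : ∏ j ∈ range n, x * (q ^ 2) ^ j = q ^ (-(n : ℤ) ^ 2) * z ^ n := by
    rw [prod_mul_distrib, prod_const, card_range, prod_pow_eq_pow_sum, sum_range_id_eq_choose_two,
      mul_comm, sq_choose_two_mul_pow_eq_zpow z hq]
    simp
  rw [two_mul, prod_range_add, ← prod_range_reflect, prod_congr rfl h_lower, prod_mul_distrib,
    prod_range_reflect (fun j => x * (q ^ 2) ^ j), h_pref]
  simp_rw [h_upper]
  ring

lemma sum_gaussBinom_mul_pow_eq_sum_Icc (hz : z ≠ 0) :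
    ∑ k ∈ range (2 * n + 1), (q ^ 2) ^ k.choose 2 * gaussBinom (q ^ 2) (2 * n) k *
        (z * q ^ (1 - 2 * n : ℤ)) ^ k =
      q ^ (-(n : ℤ) ^ 2) * z ^ n * ∑ m ∈ Icc (-(n : ℤ)) n,
        gaussBinom (q ^ 2) (2 * n) (n + m).toNat * q ^ (m ^ 2) * z ^ m := by
  rw [mul_sum]
  refine sum_nbij' (fun k => (k : ℤ) - n) (fun m => (n + m).toNat) ?_ ?_ ?_ ?_ fun k _ => ?_
  iterate 4 (intro a ha; simp only [mem_range, mem_Icc] at ha ⊢; omega)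
  have hzk : z ^ k = z ^ n * z ^ ((k : ℤ) - n) := by
    rw [← zpow_natCast, ← zpow_natCast, ← zpow_add₀ hz, add_sub_cancel]
  rw [show ((n : ℤ) + (k - n)).toNat = k by omega, mul_right_comm,
    sq_choose_two_mul_pow_eq_zpow z hq, sub_eq_neg_add, zpow_add₀ hq, hzk]
  ring

theorem prod_mul_prod_eq_sum_gaussBinom (hz : z ≠ 0) :
    (∏ j ∈ range n, (1 + z * q * (q ^ 2) ^ j)) * ∏ j ∈ range n, (1 + z⁻¹ * q * (q ^ 2) ^ j) =
      ∑ m ∈ Icc (-(n : ℤ)) n, gaussBinom (q ^ 2) (2 * n) (n + m).toNat * q ^ (m ^ 2) * z ^ m := by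
  have h := prod_one_add_mul_pow_eq_sum_gaussBinom (q ^ 2) (z * q ^ (1 - 2 * n : ℤ)) (2 * n)
  rw [prod_one_add_mul_sq_pow_eq z hq n hz, sum_gaussBinom_mul_pow_eq_sum_Icc z hq n hz] at h
  exact mul_left_cancel₀ (by positivity) h

end FiniteJacobi

section Analysis

variable {𝕜 : Type*} [NormedField 𝕜]

lemma summable_pow_sq_mul_pow {r : ℝ} (hr₀ : 0 ≤ r) (hr : r < 1) (M : ℝ) :
    Summable fun n : ℕ => r ^ (n ^ 2) * M ^ n := by
  refine Summable.of_norm_bounded_eventually_nat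
    (summable_geometric_of_lt_one (by norm_num : (0 : ℝ) ≤ 1 / 2) (by norm_num)) ?_
  have h_lim : Tendsto (fun n : ℕ => r ^ n * |M|) atTop (𝓝 0) := by
    simpa using (tendsto_pow_atTop_nhds_zero_of_lt_one hr₀ hr).mul_const |M|
  filter_upwards [h_lim.eventually_le_const (by norm_num : (0 : ℝ) < 1 / 2)] with n hn
  rw [norm_mul, norm_pow, norm_pow, Real.norm_of_nonneg hr₀, Real.norm_eq_abs, sq, pow_mul,
    ← mul_pow]
  exact pow_le_pow_left₀ (by positivity) hn n

lemma summable_norm_zpow_sq_mul_zpow {q : 𝕜} (hq : ‖q‖ < 1) (z : 𝕜) :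
    Summable fun m : ℤ => ‖q ^ (m ^ 2) * z ^ m‖ := by
  have h_sq (n : ℕ) : (n : ℤ) ^ 2 = (n ^ 2 : ℕ) := by push_cast; rfl
  apply Summable.of_nat_of_neg
  · refine (summable_pow_sq_mul_pow (norm_nonneg q) hq ‖z‖).congr fun n => ?_
    rw [norm_mul, norm_zpow, norm_zpow, h_sq, zpow_natCast, zpow_natCast]
  · refine (summable_pow_sq_mul_pow (norm_nonneg q) hq ‖z⁻¹‖).congr fun n => ?_
    rw [norm_mul, norm_zpow, norm_zpow, neg_sq, h_sq, zpow_natCast, zpow_neg, zpow_natCast,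
      norm_inv, inv_pow]

variable {w : 𝕜} (hw : ‖w‖ < 1)
include hw

lemma summable_norm_mul_pow (c : 𝕜) : Summable fun k : ℕ => ‖c * w ^ k‖ := by
  simpa [norm_mul, norm_pow] using (summable_geometric_of_lt_one (norm_nonneg w) hw).mul_left ‖c‖

lemma one_sub_mul_pow_ne_zero (k : ℕ) : 1 - w * w ^ k ≠ 0 := by
  rw [sub_ne_zero, ne_comm, ← pow_succ']
  intro h
  have h_norm := congrArg norm h
  rw [norm_pow, norm_one] at h_norm
  exact (pow_lt_one₀ (norm_nonneg w) hw k.succ_ne_zero).ne h_norm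

lemma qPochhammer_ne_zero (n : ℕ) : qPochhammer w n ≠ 0 :=
  prod_ne_zero_iff.2 fun j _ => one_sub_mul_pow_ne_zero hw j

lemma gaussBinom_eq_mul_inv (k l : ℕ) :
    gaussBinom w (k + l) k = qPochhammer w (k + l) * (qPochhammer w k)⁻¹ * (qPochhammer w l)⁻¹ := by
  rw [← gaussBinom_mul_qPochhammer_mul_qPochhammer w k l]
  field_simp [qPochhammer_ne_zero hw]

variable [CompleteSpace 𝕜]

lemma tendsto_prod_range_one_add_mul_pow (c : 𝕜) :
    Tendsto (fun n => ∏ j ∈ range n, (1 + c * w ^ j)) atTop (𝓝 (∏' k, (1 + c * w ^ k))) :=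
  (multipliable_one_add_of_summable (summable_norm_mul_pow hw c)).hasProd.tendsto_prod_nat

lemma tendsto_qPochhammer : Tendsto (qPochhammer w) atTop (𝓝 (∏' k, (1 - w * w ^ k))) := by
  have h := tendsto_prod_range_one_add_mul_pow hw (-w)
  simp only [neg_mul, ← sub_eq_add_neg] at h
  exact h

lemma tprod_one_sub_mul_pow_ne_zero : ∏' k, (1 - w * w ^ k) ≠ 0 := by
  simpa [sub_eq_add_neg] using tprod_one_add_ne_zero_of_summable (f := fun k => -w * w ^ k)
    (fun k => by simpa [sub_eq_add_neg] using one_sub_mul_pow_ne_zero hw k)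
    (summable_norm_mul_pow hw (-w))

lemma tendsto_gaussBinom {a b : ℕ → ℕ} (ha : Tendsto a atTop atTop) (hb : Tendsto b atTop atTop) :
    Tendsto (fun n => gaussBinom w (a n + b n) (a n)) atTop (𝓝 (∏' k, (1 - w * w ^ k))⁻¹) := by
  have hP := tprod_one_sub_mul_pow_ne_zero hw
  have h := tendsto_qPochhammer hw
  have h_lim := ((h.comp (ha.atTop_add_atTop hb)).mul ((h.comp ha).inv₀ hP)).mul
    ((h.comp hb).inv₀ hP)
  rw [mul_inv_cancel₀ hP, one_mul] at h_lim
  simpa only [gaussBinom_eq_mul_inv hw, Function.comp_apply] using h_lim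

lemma exists_norm_gaussBinom_le : ∃ C, ∀ N k, ‖gaussBinom w N k‖ ≤ C := by
  obtain ⟨B, hB⟩ := isBounded_iff_forall_norm_le.1
    (Metric.isBounded_range_of_tendsto _ (tendsto_qPochhammer hw))
  obtain ⟨D, hD⟩ := isBounded_iff_forall_norm_le.1
    (Metric.isBounded_range_of_tendsto _ ((tendsto_qPochhammer hw).inv₀
      (tprod_one_sub_mul_pow_ne_zero hw)))
  have hB' (n : ℕ) : ‖qPochhammer w n‖ ≤ B := hB _ ⟨n, rfl⟩
  have hD' (n : ℕ) : ‖(qPochhammer w n)⁻¹‖ ≤ D := hD _ ⟨n, rfl⟩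
  have hB₀ : 0 ≤ B := (norm_nonneg _).trans (hB' 0)
  have hD₀ : 0 ≤ D := (norm_nonneg _).trans (hD' 0)
  refine ⟨B * D * D, fun N k => ?_⟩
  rcases le_or_gt k N with hkN | hNk
  · obtain ⟨l, rfl⟩ := Nat.exists_eq_add_of_le hkN
    rw [gaussBinom_eq_mul_inv hw, norm_mul, norm_mul]
    exact mul_le_mul (mul_le_mul (hB' _) (hD' _) (norm_nonneg _) hB₀) (hD' _) (norm_nonneg _)
      (mul_nonneg hB₀ hD₀)
  · rw [gaussBinom_eq_zero_of_lt w hNk, norm_zero]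
    positivity

end Analysis

theorem tendsto_sum_Icc_gaussBinom {𝕜 : Type*} [NormedField 𝕜] [CompleteSpace 𝕜] {q : 𝕜}
    (hq : ‖q‖ < 1) (z : 𝕜) :
    Tendsto (fun n : ℕ => ∑ m ∈ Icc (-(n : ℤ)) n,
        gaussBinom (q ^ 2) (2 * n) (n + m).toNat * q ^ (m ^ 2) * z ^ m) atTop
      (𝓝 ((∏' k, (1 - q ^ 2 * (q ^ 2) ^ k))⁻¹ * ∑' m : ℤ, q ^ (m ^ 2) * z ^ m)) := by
  have hw : ‖q ^ 2‖ < 1 := by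
    rw [norm_pow]
    exact pow_lt_one₀ (norm_nonneg q) hq two_ne_zero
  obtain ⟨C, hC⟩ := exists_norm_gaussBinom_le hw
  rw [← tsum_mul_left]
  refine (tendsto_tsum_of_dominated_convergence ((summable_norm_zpow_sq_mul_zpow hq z).mul_left C)
    (fun m => ?_) (Eventually.of_forall fun n m => ?_)).congr fun n =>
      (sum_eq_tsum_indicator _ _).symm
  · have ha : Tendsto (fun n : ℕ => ((n : ℤ) + m).toNat) atTop atTop :=
      tendsto_atTop_atTop.2 fun b => ⟨b + m.natAbs, fun n hn => by omega⟩
    have hb : Tendsto (fun n : ℕ => ((n : ℤ) - m).toNat) atTop atTop :=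
      tendsto_atTop_atTop.2 fun b => ⟨b + m.natAbs, fun n hn => by omega⟩
    refine ((tendsto_gaussBinom hw ha hb).mul_const (q ^ (m ^ 2) * z ^ m)).congr' ?_
    filter_upwards [eventually_ge_atTop m.natAbs] with n hn
    rw [Set.indicator_of_mem (by simp only [coe_Icc, Set.mem_Icc]; omega),
      show ((n : ℤ) + m).toNat + ((n : ℤ) - m).toNat = 2 * n by omega, mul_assoc]
  · refine (norm_indicator_le_norm_self _ _).trans ?_
    rw [mul_assoc, norm_mul]
    exact mul_le_mul_of_nonneg_right (hC _ _) (norm_nonneg _)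

/-- Jacobi triple product: for `0 < |q| < 1` and `z ≠ 0`,
`Σ_{k∈ℤ} q^{k²} z^k = (q²;q²)_∞ (-zq;q²)_∞ (-z⁻¹q;q²)_∞`, with
`(a;q)_∞ = ∏_{k=0}^∞ (1 - a q^k)`. -/
theorem stmt_12 (q z : ℂ) (hq0 : q ≠ 0) (hq : ‖q‖ < 1) (hz : z ≠ 0) :
    (∑' k : ℤ, q ^ (k ^ 2) * z ^ k) =
      (∏' k : ℕ, (1 - q ^ 2 * (q ^ 2) ^ k)) *
      (∏' k : ℕ, (1 + z * q * (q ^ 2) ^ k)) *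
      (∏' k : ℕ, (1 + z⁻¹ * q * (q ^ 2) ^ k)) := by
  have hw : ‖q ^ 2‖ < 1 := by
    rw [norm_pow]
    exact pow_lt_one₀ (norm_nonneg q) hq two_ne_zero
  have h_prod := (tendsto_prod_range_one_add_mul_pow hw (z * q)).mul
    (tendsto_prod_range_one_add_mul_pow hw (z⁻¹ * q))
  have h_sum := tendsto_sum_Icc_gaussBinom hq z
  simp_rw [← prod_mul_prod_eq_sum_gaussBinom z hq0 _ hz] at h_sum
  rw [mul_assoc, ← tendsto_nhds_unique h_sum h_prod, ← mul_assoc,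
    mul_inv_cancel₀ (tprod_one_sub_mul_pow_ne_zero hw), one_mul]
end

section
/- For 0 < |q| < 1 and z ∈ ℂ \ {0}, the theta function θ₁ satisfies the product formula θ₁(v|τ) = -i Σ_{k∈ℤ} (-1)^k q^{(k+1/2)²} z^{k+1/2} = 2 q^{1/4} sin(πv) (q²;q²)_∞ (q² e^{2πiv}; q²)_∞ (q² e^{-2πiv}; q²)_∞, where z = e^{2πiv}, q = e^{πiτ}, Im τ > 0. -/
open Complex Filter Finset

namespace JTP


/-- If a factor vanishes, the product has `HasProd` value 0. -/
lemma hasProd_zero_of_factor_zero {f : ℕ → ℂ} {m : ℕ} (hm : f m = 0) : HasProd f 0 := by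
  rw [HasProd]
  have : ∀ᶠ s : Finset ℕ in atTop, ∏ i ∈ s, f i = 0 := by
    filter_upwards [eventually_ge_atTop ({m} : Finset ℕ)] with s hs
    exact Finset.prod_eq_zero (hs (Finset.mem_singleton_self m)) hm
  exact tendsto_const_nhds.congr' (this.mono fun s hs => hs.symm)

lemma summable_log_one_sub (a q : ℂ) (hq : ‖q‖ < 1) :
    Summable (fun n : ℕ => Complex.log (1 - a * q ^ n)) := by
  apply Summable.of_norm_bounded_eventually_nat (g := fun n => 3/2 * (‖a‖ * ‖q‖ ^ n))
  · exact (summable_geometric_of_lt_one (norm_nonneg q) hq).mul_left _ |>.mul_left _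
  · have h0 : Tendsto (fun n : ℕ => ‖a‖ * ‖q‖ ^ n) atTop (nhds 0) := by
      simpa using (tendsto_pow_atTop_nhds_zero_of_norm_lt_one (x := ‖q‖)
        (by simpa using hq)).const_mul ‖a‖
    filter_upwards [h0.eventually_le_const (show (0:ℝ) < 1/2 by norm_num)] with n hn
    have hle : ‖-(a * q ^ n)‖ ≤ 1/2 := by
      simpa [norm_mul, norm_pow] using hn
    have := Complex.norm_log_one_add_half_le_self hle
    simpa [sub_eq_add_neg, norm_mul, norm_pow] using this

lemma multipliable_one_sub (a q : ℂ) (hq : ‖q‖ < 1) :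
    Multipliable (fun n : ℕ => 1 - a * q ^ n) := by
  by_cases h : ∃ m, 1 - a * q ^ m = 0
  · obtain ⟨m, hm⟩ := h
    exact ⟨0, hasProd_zero_of_factor_zero hm⟩
  · push_neg at h
    exact Complex.multipliable_of_summable_log (summable_log_one_sub a q hq)

lemma tprod_one_sub_ne_zero (a q : ℂ) (hq : ‖q‖ < 1) (h : ∀ n, 1 - a * q ^ n ≠ 0) :
    (∏' n : ℕ, (1 - a * q ^ n)) ≠ 0 := by
  have := Complex.cexp_tsum_eq_tprod (f := fun n => 1 - a * q ^ n) h
      (summable_log_one_sub a q hq)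
  rw [← this]
  exact Complex.exp_ne_zero _

lemma tendsto_prod_one_sub (a q : ℂ) (hq : ‖q‖ < 1) :
    Tendsto (fun N => ∏ j ∈ range N, (1 - a * q ^ j)) atTop
      (nhds (∏' n : ℕ, (1 - a * q ^ n))) :=
  (multipliable_one_sub a q hq).hasProd.tendsto_prod_nat



noncomputable def Phi (Q : ℂ) (m : ℕ) : ℂ := ∏ j ∈ range m, (1 - Q ^ (j + 1))

lemma one_sub_pow_ne_zero {Q : ℂ} (hq : ‖Q‖ < 1) (j : ℕ) : 1 - Q ^ (j + 1) ≠ 0 := by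
  intro h
  have : Q ^ (j + 1) = 1 := by linear_combination -h
  have h2 : ‖Q ^ (j+1)‖ < 1 := by
    rw [norm_pow]
    exact pow_lt_one₀ (norm_nonneg Q) hq (Nat.succ_ne_zero j)
  rw [this, norm_one] at h2
  exact lt_irrefl _ h2

lemma Phi_ne_zero {Q : ℂ} (hq : ‖Q‖ < 1) (m : ℕ) : Phi Q m ≠ 0 :=
  Finset.prod_ne_zero_iff.2 fun j _ => one_sub_pow_ne_zero hq j

lemma geom_sum_aux {r : ℝ} (h0 : 0 ≤ r) (h1 : r < 1) (m : ℕ) :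
    ∑ j ∈ range m, r ^ (j + 1) ≤ r / (1 - r) := by
  have hs : Summable (fun j : ℕ => r ^ (j + 1)) := by
    simpa [pow_succ'] using (summable_geometric_of_lt_one h0 h1).mul_left r
  have := Summable.sum_le_tsum (range m) (fun j _ => by positivity) hs
  refine this.trans ?_
  have : ∑' j : ℕ, r ^ (j + 1) = r * (1 - r)⁻¹ := by
    simp_rw [pow_succ']
    rw [tsum_mul_left, tsum_geometric_of_lt_one h0 h1]
  rw [this, div_eq_mul_inv]

lemma norm_Phi_le {Q : ℂ} (hq : ‖Q‖ < 1) (m : ℕ) :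
    ‖Phi Q m‖ ≤ Real.exp (‖Q‖ / (1 - ‖Q‖)) := by
  rw [Phi, norm_prod]
  have h1 : ∀ j ∈ range m, ‖1 - Q ^ (j + 1)‖ ≤ Real.exp (‖Q‖ ^ (j + 1)) := by
    intro j _
    calc ‖1 - Q ^ (j + 1)‖ ≤ ‖(1:ℂ)‖ + ‖Q ^ (j + 1)‖ := norm_sub_le _ _
      _ = 1 + ‖Q‖ ^ (j + 1) := by rw [norm_one, norm_pow]
      _ ≤ Real.exp (‖Q‖ ^ (j + 1)) := by
          have := Real.add_one_le_exp (‖Q‖ ^ (j + 1)); linarith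
  calc ∏ j ∈ range m, ‖1 - Q ^ (j + 1)‖
      ≤ ∏ j ∈ range m, Real.exp (‖Q‖ ^ (j + 1)) :=
        Finset.prod_le_prod (fun j _ => norm_nonneg _) h1
    _ = Real.exp (∑ j ∈ range m, ‖Q‖ ^ (j + 1)) := by rw [Real.exp_sum]
    _ ≤ Real.exp (‖Q‖ / (1 - ‖Q‖)) :=
        Real.exp_le_exp.2 (geom_sum_aux (norm_nonneg Q) hq m)

lemma exp_le_one_sub {x r : ℝ} (hx : 0 ≤ x) (hxr : x ≤ r) (hr : r < 1) :
    Real.exp (-(x / (1 - r))) ≤ 1 - x := by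
  have h1 : 0 < 1 - x := by linarith
  have h2 : Real.log (1 - x)⁻¹ ≤ (1 - x)⁻¹ - 1 := Real.log_le_sub_one_of_pos (by positivity)
  rw [Real.log_inv] at h2
  have h3 : (1 - x)⁻¹ - 1 = x / (1 - x) := by field_simp; ring
  have h4 : x / (1 - x) ≤ x / (1 - r) := by
    apply div_le_div_of_nonneg_left hx (by linarith) (by linarith)
  have h5 : -(x / (1 - r)) ≤ Real.log (1 - x) := by
    rw [h3] at h2; linarith
  calc Real.exp (-(x / (1 - r))) ≤ Real.exp (Real.log (1 - x)) := Real.exp_le_exp.2 h5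
    _ = 1 - x := Real.exp_log h1

lemma norm_Phi_ge {Q : ℂ} (hq : ‖Q‖ < 1) (m : ℕ) :
    Real.exp (-(‖Q‖ / (1 - ‖Q‖) / (1 - ‖Q‖))) ≤ ‖Phi Q m‖ := by
  rw [Phi, norm_prod]
  have h1 : ∀ j ∈ range m, Real.exp (-(‖Q‖ ^ (j + 1) / (1 - ‖Q‖))) ≤ ‖1 - Q ^ (j + 1)‖ := by
    intro j _
    have hb : ‖Q‖ ^ (j + 1) ≤ ‖Q‖ := pow_le_of_le_one (norm_nonneg Q) hq.le (Nat.succ_ne_zero j)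
    refine (exp_le_one_sub (by positivity) hb hq).trans ?_
    have := norm_sub_norm_le (1 : ℂ) (Q ^ (j + 1))
    rw [norm_one, norm_pow] at this
    linarith
  calc Real.exp (-(‖Q‖ / (1 - ‖Q‖) / (1 - ‖Q‖)))
      ≤ Real.exp (∑ j ∈ range m, -(‖Q‖ ^ (j + 1) / (1 - ‖Q‖))) := by
        apply Real.exp_le_exp.2
        have key := geom_sum_aux (norm_nonneg Q) hq m
        have h1r : (0:ℝ) < 1 - ‖Q‖ := by linarith
        rw [Finset.sum_neg_distrib, ← Finset.sum_div]
        apply neg_le_neg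
        rw [div_le_div_iff_of_pos_right h1r]
        exact key
    _ = ∏ j ∈ range m, Real.exp (-(‖Q‖ ^ (j + 1) / (1 - ‖Q‖))) := by rw [Real.exp_sum]
    _ ≤ ∏ j ∈ range m, ‖1 - Q ^ (j + 1)‖ :=
        Finset.prod_le_prod (fun j _ => (Real.exp_pos _).le) h1


noncomputable def Gn (Q : ℂ) (a b : ℕ) : ℂ := Phi Q (a + b) / (Phi Q a * Phi Q b)

set_option maxHeartbeats 2000000 in
lemma key_id (u w Q PA PB PC : ℂ) (n1 : PC ≠ 0) (n2 : PA ≠ 0) (n3 : PB ≠ 0)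
    (n4 : 1 - u ≠ 0) (n5 : 1 - u * Q ≠ 0) (n6 : 1 - w ≠ 0) (n7 : 1 - w * Q ≠ 0) :
    PC * (1 - u * w * Q) * (1 - u * w * Q ^ 2) / (PA * (1 - u) * (1 - u * Q) * (PB * (1 - w) * (1 - w * Q))) =
    PC / (PA * (1 - u) * (PB * (1 - w))) * (1 + u * w * Q) + PC / (PA * (PB * (1 - w) * (1 - w * Q))) * (w * Q) +
      PC / (PA * (1 - u) * (1 - u * Q) * PB) * (u * Q) := by
  have h1 : PA * (1 - u) * (PB * (1 - w)) ≠ 0 := by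
    exact mul_ne_zero (mul_ne_zero n2 n4) (mul_ne_zero n3 n6)
  have h2 : PA * (PB * (1 - w) * (1 - w * Q)) ≠ 0 := by
    exact mul_ne_zero n2 (mul_ne_zero (mul_ne_zero n3 n6) n7)
  have h3 : PA * (1 - u) * (1 - u * Q) * PB ≠ 0 := by
    exact mul_ne_zero (mul_ne_zero (mul_ne_zero n2 n4) n5) n3
  have hL : PA * (1 - u) * (1 - u * Q) * (PB * (1 - w) * (1 - w * Q)) ≠ 0 := by
    exact mul_ne_zero (mul_ne_zero (mul_ne_zero n2 n4) n5) (mul_ne_zero (mul_ne_zero n3 n6) n7)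
  rw [div_mul_eq_mul_div, div_mul_eq_mul_div, div_mul_eq_mul_div,
    div_add_div _ _ h1 h2, div_add_div _ _ (mul_ne_zero h1 h2) h3,
    div_eq_div_iff hL (mul_ne_zero (mul_ne_zero h1 h2) h3)]
  ring


lemma Phi_succ (Q : ℂ) (m : ℕ) : Phi Q (m + 1) = Phi Q m * (1 - Q ^ (m + 1)) :=
  Finset.prod_range_succ _ m

set_option maxHeartbeats 1000000 in
lemma Gn_pascal {Q : ℂ} (hq : ‖Q‖ < 1) (a b : ℕ) :
    Gn Q (a + 2) (b + 2) = Gn Q (a + 1) (b + 1) * (1 + Q ^ (a + b + 3))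
      + Gn Q a (b + 2) * Q ^ (b + 2) + Gn Q (a + 2) b * Q ^ (a + 2) := by
  have n1 := Phi_ne_zero hq (a + b + 2)
  have n2 := Phi_ne_zero hq a
  have n3 := Phi_ne_zero hq b
  have n4 : 1 - Q ^ (a + 1) ≠ 0 := one_sub_pow_ne_zero hq a
  have n5 : 1 - Q ^ (a + 1) * Q ≠ 0 := by
    rw [← pow_succ]; simpa [show a + 1 + 1 = a + 2 by omega] using one_sub_pow_ne_zero hq (a + 1)
  have n6 : 1 - Q ^ (b + 1) ≠ 0 := one_sub_pow_ne_zero hq b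
  have n7 : 1 - Q ^ (b + 1) * Q ≠ 0 := by
    rw [← pow_succ]; simpa [show b + 1 + 1 = b + 2 by omega] using one_sub_pow_ne_zero hq (b + 1)
  rw [Gn, Gn, Gn, Gn,
      show a + 2 + (b + 2) = (a + b + 2) + 1 + 1 by omega,
      show a + 1 + (b + 1) = a + b + 2 by omega,
      show a + (b + 2) = a + b + 2 by omega,
      show a + 2 + b = a + b + 2 by omega,
      Phi_succ Q ((a+b+2)+1), Phi_succ Q (a+b+2),
      show a + 2 = (a + 1) + 1 by omega, Phi_succ Q (a+1), Phi_succ Q a,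
      show b + 2 = (b + 1) + 1 by omega, Phi_succ Q (b+1), Phi_succ Q b,
      show a + 1 + 1 = a + 2 by omega, show b + 1 + 1 = b + 2 by omega,
      show a + b + 2 + 1 = a + b + 3 by omega, show a + b + 3 + 1 = a + b + 4 by omega]
  have pa2 : Q ^ (a + 2) = Q ^ (a + 1) * Q := by rw [← pow_succ]
  have pb2 : Q ^ (b + 2) = Q ^ (b + 1) * Q := by rw [← pow_succ]
  have pab3 : Q ^ (a + b + 3) = Q ^ (a + 1) * Q ^ (b + 1) * Q := by
    rw [← pow_add, ← pow_succ]; congr 1; omega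
  have pab4 : Q ^ (a + b + 4) = Q ^ (a + 1) * Q ^ (b + 1) * Q ^ 2 := by
    rw [← pow_add, ← pow_add]; congr 1; omega
  rw [pa2, pb2, pab3, pab4]
  set u := Q ^ (a + 1) with hu
  set w := Q ^ (b + 1) with hw
  set PA := Phi Q a with hPA
  set PB := Phi Q b with hPB
  set PC := Phi Q (a + b + 2) with hPC
  clear_value u w PA PB PC
  exact key_id u w Q PA PB PC n1 n2 n3 n4 n5 n6 n7


lemma Phi_zero (Q : ℂ) : Phi Q 0 = 1 := Finset.prod_range_zero _

lemma Gn_comm (Q : ℂ) (a b : ℕ) : Gn Q a b = Gn Q b a := by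
  rw [Gn, Gn, add_comm a b, mul_comm]

lemma Gn_zero_right {Q : ℂ} (hq : ‖Q‖ < 1) (m : ℕ) : Gn Q m 0 = 1 := by
  rw [Gn, Phi_zero, add_zero, mul_one, div_self (Phi_ne_zero hq m)]

noncomputable def Gk (Q : ℂ) (N : ℕ) (k : ℤ) : ℂ :=
  if k.natAbs ≤ N then Gn Q ((N : ℤ) + k).toNat ((N : ℤ) - k).toNat else 0

lemma Gk_eq_Gn (Q : ℂ) (N : ℕ) (k : ℤ) (a b : ℕ) (hak : (a : ℤ) = N + k)
    (hbk : (b : ℤ) = N - k) : Gk Q N k = Gn Q a b := by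
  have h : k.natAbs ≤ N := by omega
  rw [Gk, if_pos h]
  congr 1 <;> omega

lemma Gk_eq_zero (Q : ℂ) {N : ℕ} {k : ℤ} (h : N < k.natAbs) : Gk Q N k = 0 := by
  rw [Gk, if_neg (by omega)]

lemma Gk_neg (Q : ℂ) (N : ℕ) (k : ℤ) : Gk Q N (-k) = Gk Q N k := by
  rw [Gk, Gk, Int.natAbs_neg]
  split_ifs with h
  · rw [show (N : ℤ) + -k = N - k by ring, show (N : ℤ) - -k = N + k by ring, Gn_comm]
  · rfl

lemma key_edge (Q x P1 P2 : ℂ) (hP1 : P1 ≠ 0) (hP2 : P2 ≠ 0) (hQ : 1 - Q ≠ 0)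
    (hxQ : 1 - x * Q ≠ 0) :
    P2 * (1 - x * Q) * (1 - x * Q ^ 2) / (P2 * (1 - x * Q) * (1 - Q)) =
      (1 + x * Q) + P1 * (1 - x) / (P1 * (1 - Q)) * Q := by
  have h1 : P2 * (1 - x * Q) * (1 - Q) ≠ 0 := mul_ne_zero (mul_ne_zero hP2 hxQ) hQ
  have h2 : P1 * (1 - Q) ≠ 0 := mul_ne_zero hP1 hQ
  rw [div_mul_eq_mul_div, add_div' _ _ _ h2, div_eq_div_iff h1 h2]
  ring

lemma Gn_pascal_edge {Q : ℂ} (hq : ‖Q‖ < 1) (M : ℕ) :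
    Gn Q (2*M+3) 1 = Gn Q (2*M+2) 0 * (1 + Q ^ (2*M+3)) + Gn Q (2*M+1) 1 * Q := by
  rw [Gn_zero_right hq, one_mul, Gn, Gn,
    show 2*M+3+1 = (2*M+3)+1 from rfl, Phi_succ Q (2*M+3),
    show 2*M+3 = (2*M+2)+1 from by omega, Phi_succ Q (2*M+2),
    show 2*M+2 = (2*M+1)+1 from by omega, Phi_succ Q (2*M+1),
    show (1:ℕ) = 0+1 from rfl, Phi_succ Q 0, Phi_zero, one_mul]
  have e1 : Q ^ (2*M+1+1) = Q ^ (2*M+1) * Q := by ring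
  have e2 : Q ^ (2*M+1+1+1) = (Q ^ (2*M+1) * Q) * Q := by ring
  have e3 : Q ^ (2*M+1+1+1+1) = (Q ^ (2*M+1) * Q) * Q ^ 2 := by ring
  rw [show (0:ℕ)+1 = 1 from rfl, pow_one, e1, e2, e3]
  set x := Q ^ (2*M+1) * Q with hx
  set P1 := Phi Q (2*M+1) with hP1
  have n1 : P1 ≠ 0 := Phi_ne_zero hq _
  have n2 : P1 * (1 - x) ≠ 0 := by
    rw [hx, ← pow_succ]
    exact mul_ne_zero n1 (one_sub_pow_ne_zero hq (2*M+1))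
  have n3 : (1 : ℂ) - Q ≠ 0 := by simpa using one_sub_pow_ne_zero hq 0
  have n4 : (1 : ℂ) - x * Q ≠ 0 := by
    rw [hx, show Q ^ (2*M+1) * Q * Q = Q ^ (2*M+2+1) by ring]
    exact one_sub_pow_ne_zero hq (2*M+2)
  set P2 := P1 * (1 - x) with hP2
  clear_value x P1
  exact key_edge Q x P1 P2 n1 n2 n3 n4

lemma Gn_one_one {Q : ℂ} (hq : ‖Q‖ < 1) : Gn Q 1 1 = 1 + Q := by
  have n1 : (1:ℂ) - Q ≠ 0 := by simpa using one_sub_pow_ne_zero hq 0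
  have n2 : (1:ℂ) - Q ^ 2 ≠ 0 := by
    simpa using one_sub_pow_ne_zero hq 1
  rw [Gn, show (1:ℕ)+1 = 2 from rfl, show (2:ℕ) = 1+1 from rfl, Phi_succ Q 1,
    show (1:ℕ) = 0+1 from rfl, Phi_succ Q 0, Phi_zero, one_mul]
  rw [div_eq_iff (by simpa using mul_ne_zero n1 n1)]
  norm_num
  ring

lemma star_nonneg {Q : ℂ} (hq : ‖Q‖ < 1) (N j : ℕ) :
    Gk Q (N + 1) (j : ℤ) = Gk Q N (j : ℤ) * (1 + Q ^ (2 * N + 1))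
      + Gk Q N ((j : ℤ) - 1) * Q ^ (((N : ℤ) + 1 - j).toNat)
      + Gk Q N ((j : ℤ) + 1) * Q ^ (((N : ℤ) + 1 + j).toNat) := by
  rcases lt_or_ge (j : ℤ) (N : ℤ) with hj | hj
  · -- interior case: j + 1 ≤ N
    obtain ⟨d, hd⟩ : ∃ d, N = j + d + 1 := ⟨N - j - 1, by omega⟩
    subst hd
    rw [Gk_eq_Gn Q _ _ (2*j+d+2) (d+2) (by push_cast; ring) (by push_cast; ring),
        Gk_eq_Gn Q _ _ (2*j+d+1) (d+1) (by push_cast; ring) (by push_cast; ring),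
        Gk_eq_Gn Q _ _ (2*j+d) (d+2) (by push_cast; ring) (by push_cast; ring),
        Gk_eq_Gn Q _ _ (2*j+d+2) d (by push_cast; ring) (by push_cast; ring),
        show (((j + d + 1 : ℕ) : ℤ) + 1 - (j:ℕ)).toNat = d + 2 by omega,
        show (((j + d + 1 : ℕ) : ℤ) + 1 + (j:ℕ)).toNat = 2*j + d + 2 by omega,
        show 2 * (j + d + 1) + 1 = (2*j+d) + d + 3 by omega]
    exact Gn_pascal hq (2*j+d) d
  · rcases eq_or_lt_of_le hj with hj' | hj'
    · -- j = N
      have hjN : j = N := by omega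
      subst hjN
      rw [Gk_eq_Gn Q (j+1) _ (2*j+1) 1 (by push_cast; ring) (by push_cast; ring),
          Gk_eq_Gn Q j (j:ℤ) (2*j) 0 (by push_cast; ring) (by push_cast; ring),
          Gk_eq_zero Q (N := j) (k := (j:ℤ)+1) (by omega),
          show (((j:ℕ) : ℤ) + 1 - (j:ℕ)).toNat = 1 by omega, pow_one, zero_mul, add_zero]
      rcases Nat.eq_zero_or_pos j with rfl | hN1
      · rw [show ((0:ℕ):ℤ) - 1 = -1 by ring, Gk_eq_zero Q (N := 0) (k := (-1:ℤ)) (by omega),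
          zero_mul, add_zero, Gn_zero_right hq, one_mul]
        simpa using Gn_one_one hq
      · obtain ⟨M, rfl⟩ : ∃ M, j = M + 1 := ⟨j - 1, by omega⟩
        rw [Gk_eq_Gn Q (M+1) (((M+1:ℕ):ℤ) - 1) (2*M+1) 1 (by push_cast; ring) (by push_cast; ring)]
        exact Gn_pascal_edge hq M
    · -- j ≥ N + 1
      rcases eq_or_lt_of_le (show (N:ℤ) + 1 ≤ j by omega) with hj'' | hj''
      · -- j = N + 1
        have hjN : j = N + 1 := by omega
        subst hjN
        rw [Gk_eq_Gn Q (N+1) _ (2*N+2) 0 (by push_cast; ring) (by push_cast; ring),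
            Gk_eq_zero Q (N := N) (k := (((N+1:ℕ)):ℤ)) (by omega),
            Gk_eq_zero Q (N := N) (k := (((N+1:ℕ)):ℤ)+1) (by omega),
            Gk_eq_Gn Q N (((N+1:ℕ):ℤ)-1) (2*N) 0 (by push_cast; ring) (by push_cast; ring),
            show (((N:ℕ):ℤ) + 1 - ((N+1:ℕ):ℤ)).toNat = 0 by omega,
            Gn_zero_right hq, Gn_zero_right hq]
        simp
      · -- j ≥ N + 2
        rw [Gk_eq_zero Q (N := N+1) (k := ((j:ℕ):ℤ)) (by omega),
            Gk_eq_zero Q (N := N) (k := ((j:ℕ):ℤ)) (by omega),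
            Gk_eq_zero Q (N := N) (k := ((j:ℕ):ℤ)-1) (by omega),
            Gk_eq_zero Q (N := N) (k := ((j:ℕ):ℤ)+1) (by omega)]
        ring

lemma star {Q : ℂ} (hq : ‖Q‖ < 1) (N : ℕ) (k : ℤ) :
    Gk Q (N + 1) k = Gk Q N k * (1 + Q ^ (2 * N + 1))
      + Gk Q N (k - 1) * Q ^ (((N : ℤ) + 1 - k).toNat)
      + Gk Q N (k + 1) * Q ^ (((N : ℤ) + 1 + k).toNat) := by
  rcases le_or_gt 0 k with hk | hk
  · obtain ⟨j, rfl⟩ : ∃ j : ℕ, k = (j : ℤ) := ⟨k.toNat, by omega⟩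
    exact star_nonneg hq N j
  · obtain ⟨j, rfl⟩ : ∃ j : ℕ, k = -(j : ℤ) := ⟨k.natAbs, by omega⟩
    have h := star_nonneg hq N j
    rw [← Gk_neg Q (N+1) (j:ℤ), ← Gk_neg Q N (j:ℤ),
        ← Gk_neg Q N ((j:ℤ) - 1), ← Gk_neg Q N ((j:ℤ) + 1)] at h
    rw [show -((j:ℤ) - 1) = -(j:ℤ) + 1 by ring, show -((j:ℤ) + 1) = -(j:ℤ) - 1 by ring] at h
    rw [h, show ((N : ℤ) + 1 - -(j:ℤ)).toNat = ((N : ℤ) + 1 + (j:ℤ)).toNat by omega,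
        show ((N : ℤ) + 1 + -(j:ℤ)).toNat = ((N : ℤ) + 1 - (j:ℤ)).toNat by omega]
    ring





/-- The uniform bound for the Gaussian-binomial-like coefficients. -/
noncomputable def Cb (r : ℝ) : ℝ :=
  Real.exp (r / (1 - r)) / Real.exp (-(r / (1 - r) / (1 - r))) ^ 2

lemma Cb_pos (r : ℝ) : 0 < Cb r := by
  unfold Cb; positivity

lemma norm_Gk_le {Q : ℂ} (hq : ‖Q‖ < 1) (N : ℕ) (k : ℤ) : ‖Gk Q N k‖ ≤ Cb ‖Q‖ := by
  rw [Gk]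
  split_ifs with h
  · rw [Gn, norm_div, norm_mul, Cb]
    set c := Real.exp (-(‖Q‖ / (1 - ‖Q‖) / (1 - ‖Q‖))) with hc
    have hcpos : 0 < c := Real.exp_pos _
    apply div_le_div₀ (by positivity) (norm_Phi_le hq _) (by positivity)
    calc c ^ 2 = c * c := sq c
      _ ≤ ‖Phi Q (((N:ℤ) + k).toNat)‖ * ‖Phi Q (((N:ℤ) - k).toNat)‖ :=
        mul_le_mul (norm_Phi_ge hq _) (norm_Phi_ge hq _) hcpos.le (norm_nonneg _)
  · simp only [norm_zero]
    exact (Cb_pos _).le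

lemma tendsto_Phi {Q : ℂ} (hq : ‖Q‖ < 1) :
    Tendsto (Phi Q) atTop (nhds (∏' n : ℕ, (1 - Q * Q ^ n))) := by
  apply (tendsto_prod_one_sub Q Q hq).congr
  intro N
  exact Finset.prod_congr rfl fun j _ => by rw [pow_succ']

lemma tprod_P1_ne_zero {Q : ℂ} (hq : ‖Q‖ < 1) : (∏' n : ℕ, (1 - Q * Q ^ n)) ≠ 0 :=
  tprod_one_sub_ne_zero Q Q hq fun n => by
    simpa [pow_succ'] using one_sub_pow_ne_zero hq n

lemma tendsto_Gk {Q : ℂ} (hq : ‖Q‖ < 1) (k : ℤ) :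
    Tendsto (fun N => Gk Q N k) atTop (nhds (∏' n : ℕ, (1 - Q * Q ^ n))⁻¹) := by
  set P := ∏' n : ℕ, (1 - Q * Q ^ n) with hP
  have hPne : P ≠ 0 := tprod_P1_ne_zero hq
  have h2N : Tendsto (fun N : ℕ => 2 * N) atTop atTop :=
    tendsto_atTop_atTop.2 fun b => ⟨b, fun N hN => by omega⟩
  have hA : Tendsto (fun N : ℕ => ((N : ℤ) + k).toNat) atTop atTop :=
    tendsto_atTop_atTop.2 fun b => ⟨b + k.natAbs, fun N hN => by omega⟩
  have hB : Tendsto (fun N : ℕ => ((N : ℤ) - k).toNat) atTop atTop :=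
    tendsto_atTop_atTop.2 fun b => ⟨b + k.natAbs, fun N hN => by omega⟩
  have main : Tendsto (fun N : ℕ =>
      Phi Q (2 * N) / (Phi Q ((N : ℤ) + k).toNat * Phi Q ((N : ℤ) - k).toNat)) atTop
      (nhds (P / (P * P))) :=
    ((tendsto_Phi hq).comp h2N).div
      (((tendsto_Phi hq).comp hA).mul ((tendsto_Phi hq).comp hB)) (mul_ne_zero hPne hPne)
  have heq : P / (P * P) = P⁻¹ := by field_simp
  rw [← heq]
  apply main.congr'
  filter_upwards [eventually_ge_atTop k.natAbs] with N hN
  rw [Gk, if_pos hN, Gn, show ((N : ℤ) + k).toNat + ((N : ℤ) - k).toNat = 2 * N by omega]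




lemma qpow_aux {q : ℂ} (hq0 : q ≠ 0) (m : ℕ) (e : ℤ) (he : 0 ≤ e) (f g : ℤ)
    (hfg : 2 * e + f = 2 * (m : ℤ) + g) :
    ((q : ℂ) ^ 2) ^ e.toNat * q ^ f = (q ^ 2) ^ m * q ^ g := by
  have hbase : ((q : ℂ) ^ 2) = q ^ (2 : ℤ) := by rw [pow_two, zpow_two]
  have h1 : ((q : ℂ) ^ 2) ^ e.toNat = q ^ (2 * e) := by
    rw [← zpow_natCast (q ^ 2) e.toNat, Int.toNat_of_nonneg he, hbase, ← zpow_mul]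
  have h2 : ((q : ℂ) ^ 2) ^ m = q ^ (2 * (m : ℤ)) := by
    rw [← zpow_natCast (q ^ 2) m, hbase, ← zpow_mul]
  rw [h1, h2, ← zpow_add₀ hq0, ← zpow_add₀ hq0, hfg]

/-- Summand in the finite Cauchy identity. -/
noncomputable def F (q z : ℂ) (N : ℕ) (k : ℤ) : ℂ :=
  (-1 : ℂ) ^ k * Gk (q ^ 2) N k * q ^ (k * (k + 1)) * z ^ k

lemma F_eq_zero (q z : ℂ) {N : ℕ} {k : ℤ} (h : N < k.natAbs) : F q z N k = 0 := by
  rw [F, Gk_eq_zero _ h]; ring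

lemma summable_F (q z : ℂ) (N : ℕ) : Summable (F q z N) :=
  summable_of_ne_finset_zero (s := Finset.Icc (-(N : ℤ)) N) fun k hk =>
    F_eq_zero q z (by simp only [Finset.mem_Icc] at hk; omega)

lemma F_rec {q z : ℂ} (hq2 : ‖q ^ 2‖ < 1) (hq0 : q ≠ 0) (hz : z ≠ 0) (N : ℕ) (k : ℤ) :
    F q z (N + 1) k = (1 + (q ^ 2) ^ (2 * N + 1)) * F q z N k
      - z * (q ^ 2) ^ (N + 1) * F q z N (k - 1)
      - z⁻¹ * (q ^ 2) ^ N * F q z N (k + 1) := by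
  have hm1 : (-1 : ℂ) ≠ 0 := by norm_num
  have h2 : (-1 : ℂ) ^ k * (Gk (q ^ 2) N (k - 1) * (q ^ 2) ^ (((N : ℤ) + 1 - k).toNat))
        * q ^ (k * (k + 1)) * z ^ k
      = -(z * (q ^ 2) ^ (N + 1) *
          ((-1 : ℂ) ^ (k - 1) * Gk (q ^ 2) N (k - 1) * q ^ ((k - 1) * (k - 1 + 1)) * z ^ (k - 1))) := by
    rcases le_or_gt k ((N : ℤ) + 1) with h | h
    · have e1 : ((q : ℂ) ^ 2) ^ (((N : ℤ) + 1 - k).toNat) * q ^ (k * (k + 1))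
          = (q ^ 2) ^ (N + 1) * q ^ ((k - 1) * (k - 1 + 1)) :=
        qpow_aux hq0 (N + 1) ((N : ℤ) + 1 - k) (by omega) _ _ (by push_cast; ring)
      have e2 : (z : ℂ) ^ k = z ^ (k - 1) * z := by
        calc (z : ℂ) ^ k = z ^ ((k - 1) + 1) := by norm_num
          _ = z ^ (k - 1) * z := zpow_add_one₀ hz _
      have e3 : (-1 : ℂ) ^ k = -(-1 : ℂ) ^ (k - 1) := by
        calc (-1 : ℂ) ^ k = (-1 : ℂ) ^ ((k - 1) + 1) := by norm_num
          _ = (-1 : ℂ) ^ (k - 1) * (-1) := zpow_add_one₀ hm1 _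
          _ = -(-1 : ℂ) ^ (k - 1) := by ring
      rw [e3, e2]
      linear_combination (-(-1 : ℂ) ^ (k - 1) * Gk (q ^ 2) N (k - 1) * z ^ (k - 1) * z) * e1
    · rw [Gk_eq_zero (q ^ 2) (show N < (k - 1).natAbs by omega)]
      ring
  have h3 : (-1 : ℂ) ^ k * (Gk (q ^ 2) N (k + 1) * (q ^ 2) ^ (((N : ℤ) + 1 + k).toNat))
        * q ^ (k * (k + 1)) * z ^ k
      = -(z⁻¹ * (q ^ 2) ^ N *
          ((-1 : ℂ) ^ (k + 1) * Gk (q ^ 2) N (k + 1) * q ^ ((k + 1) * (k + 1 + 1)) * z ^ (k + 1))) := by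
    rcases le_or_gt (-(N : ℤ) - 1) k with h | h
    · have e1 : ((q : ℂ) ^ 2) ^ (((N : ℤ) + 1 + k).toNat) * q ^ (k * (k + 1))
          = (q ^ 2) ^ N * q ^ ((k + 1) * (k + 1 + 1)) :=
        qpow_aux hq0 N ((N : ℤ) + 1 + k) (by omega) _ _ (by push_cast; ring)
      have e2 : (z : ℂ) ^ k = z⁻¹ * z ^ (k + 1) := by
        rw [zpow_add_one₀ hz]
        field_simp
      have e3 : (-1 : ℂ) ^ k = -(-1 : ℂ) ^ (k + 1) := by
        rw [zpow_add_one₀ hm1]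
        ring
      rw [e3, e2]
      linear_combination (-(-1 : ℂ) ^ (k + 1) * Gk (q ^ 2) N (k + 1) * z⁻¹ * z ^ (k + 1)) * e1
    · rw [Gk_eq_zero (q ^ 2) (show N < (k + 1).natAbs by omega)]
      ring
  unfold F
  rw [star hq2 N k]
  linear_combination h2 + h3

lemma cauchy {q z : ℂ} (hq2 : ‖q ^ 2‖ < 1) (hq0 : q ≠ 0) (hz : z ≠ 0) (N : ℕ) :
    (∏ j ∈ range N, (1 - z * (q ^ 2) ^ (j + 1))) * (∏ j ∈ range N, (1 - z⁻¹ * (q ^ 2) ^ j))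
      = ∑' k : ℤ, F q z N k := by
  induction N with
  | zero =>
    simp only [range_zero, prod_empty, one_mul]
    rw [tsum_eq_single 0 (fun k hk => F_eq_zero q z (by omega))]
    rw [F, Gk]
    simp [Gn, Phi]
  | succ N ih =>
    have S0 : Summable (F q z N) := summable_F q z N
    have S1 : Summable (fun k : ℤ => (1 + (q ^ 2) ^ (2 * N + 1)) * F q z N k) := S0.mul_left _
    have S2 : Summable (fun k : ℤ => z * (q ^ 2) ^ (N + 1) * F q z N (k - 1)) := by
      have := (Equiv.subRight (1 : ℤ)).summable_iff.2
        (S0.mul_left (z * (q ^ 2) ^ (N + 1)))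
      exact this
    have S3 : Summable (fun k : ℤ => z⁻¹ * (q ^ 2) ^ N * F q z N (k + 1)) := by
      have := (Equiv.addRight (1 : ℤ)).summable_iff.2
        (S0.mul_left (z⁻¹ * (q ^ 2) ^ N))
      exact this
    have hsum : ∑' k : ℤ, F q z (N + 1) k
        = ((1 + (q ^ 2) ^ (2 * N + 1)) * ∑' k : ℤ, F q z N k)
          - (z * (q ^ 2) ^ (N + 1) * ∑' k : ℤ, F q z N k)
          - (z⁻¹ * (q ^ 2) ^ N * ∑' k : ℤ, F q z N k) := by
      rw [tsum_congr (fun k => F_rec hq2 hq0 hz N k), Summable.tsum_sub (S1.sub S2) S3, Summable.tsum_sub S1 S2]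
      congr 1
      · congr 1
        · rw [tsum_mul_left]
        · rw [← tsum_mul_left]
          exact ((Equiv.subRight (1 : ℤ)).tsum_eq
            (fun k => z * (q ^ 2) ^ (N + 1) * F q z N k)).symm ▸ rfl
      · rw [← tsum_mul_left]
        exact ((Equiv.addRight (1 : ℤ)).tsum_eq
          (fun k => z⁻¹ * (q ^ 2) ^ N * F q z N k)).symm ▸ rfl
    rw [prod_range_succ, prod_range_succ, hsum, ← ih]
    have hzz : z * z⁻¹ = 1 := mul_inv_cancel₀ hz
    have hpow : (q ^ 2 : ℂ) ^ (N + 1) * (q ^ 2) ^ N = (q ^ 2) ^ (2 * N + 1) := by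
      rw [← pow_add]; congr 1; omega
    linear_combination ((∏ j ∈ range N, (1 - z * (q ^ 2) ^ (j + 1))) *
        (∏ j ∈ range N, (1 - z⁻¹ * (q ^ 2) ^ j)) * (z * z⁻¹)) * hpow +
      ((∏ j ∈ range N, (1 - z * (q ^ 2) ^ (j + 1))) *
        (∏ j ∈ range N, (1 - z⁻¹ * (q ^ 2) ^ j)) * (q^2)^(2*N+1)) * hzz






lemma summable_aux (r s : ℝ) (hr0 : 0 ≤ r) (hr : r < 1) (hs : 0 ≤ s) :
    Summable (fun n : ℕ => r ^ (n * (n + 1)) * s ^ n) := by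
  apply summable_of_ratio_norm_eventually_le (r := 1/2) (by norm_num)
  have h0 : Tendsto (fun n : ℕ => (r ^ 2) ^ n * (r ^ 2 * s)) atTop (nhds 0) := by
    have := (tendsto_pow_atTop_nhds_zero_of_lt_one (by positivity)
      (by nlinarith : r ^ 2 < 1)).mul_const (r ^ 2 * s)
    simpa using this
  filter_upwards [h0.eventually_le_const (show (0:ℝ) < 1/2 by norm_num)] with n hn
  have key : r ^ ((n+1) * (n+1+1)) * s ^ (n+1)
      = (r ^ (n * (n+1)) * s ^ n) * ((r ^ 2) ^ n * (r ^ 2 * s)) := by ring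
  rw [Real.norm_eq_abs, Real.norm_eq_abs, _root_.abs_of_nonneg (by positivity : (0:ℝ) ≤ r ^ ((n+1) * (n+1+1)) * s ^ (n+1)),
    _root_.abs_of_nonneg (by positivity : (0:ℝ) ≤ r ^ (n * (n+1)) * s ^ n), key,
    mul_comm (1/2 : ℝ)]
  exact mul_le_mul_of_nonneg_left hn (by positivity)

lemma summable_bound (r s : ℝ) (hr0 : 0 < r) (hr : r < 1) (hs : 0 < s) :
    Summable (fun k : ℤ => r ^ (k * (k + 1)) * s ^ k) := by
  apply Summable.of_nat_of_neg_add_one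
  · apply (summable_aux r s hr0.le hr hs.le).congr
    intro n
    rw [show ((n:ℤ) * ((n:ℤ) + 1)) = ((n * (n+1) : ℕ) : ℤ) by push_cast; ring,
      zpow_natCast, show ((n:ℤ)) = ((n : ℕ) : ℤ) from rfl, zpow_natCast]
  · apply Summable.congr (((summable_aux r s⁻¹ hr0.le hr (by positivity)).mul_right s⁻¹))
    intro n
    have e1 : (-((n:ℤ) + 1)) * (-((n:ℤ) + 1) + 1) = ((n * (n+1) : ℕ) : ℤ) := by push_cast; ring
    have e2 : s ^ (-((n:ℤ) + 1)) = (s⁻¹) ^ n * s⁻¹ := by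
      rw [zpow_neg, ← inv_zpow, show ((n:ℤ) + 1) = ((n + 1 : ℕ) : ℤ) by push_cast; ring,
        zpow_natCast, pow_succ]
    rw [e1, zpow_natCast, e2]
    ring

theorem jtp_core (q z : ℂ) (hq : ‖q‖ < 1) (hq0 : q ≠ 0) (hz : z ≠ 0) :
    ∑' k : ℤ, ((-1 : ℂ) ^ k * q ^ (k * (k + 1)) * z ^ k)
      = (∏' n : ℕ, (1 - q ^ 2 * (q ^ 2) ^ n)) *
        ((∏' n : ℕ, (1 - z * (q ^ 2) * (q ^ 2) ^ n)) * (∏' n : ℕ, (1 - z⁻¹ * (q ^ 2) ^ n))) := by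
  have hq2 : ‖(q : ℂ) ^ 2‖ < 1 := by
    rw [norm_pow]
    exact pow_lt_one₀ (norm_nonneg q) hq two_ne_zero
  set Q := (q : ℂ) ^ 2 with hQdef
  set P1 := ∏' n : ℕ, (1 - Q * Q ^ n) with hP1def
  have hP1 : P1 ≠ 0 := tprod_P1_ne_zero hq2
  have hqn : 0 < ‖q‖ := norm_pos_iff.2 hq0
  have hzn : 0 < ‖z‖ := norm_pos_iff.2 hz
  -- domination
  have hb : ∀ N : ℕ, ∀ k : ℤ, ‖F q z N k‖ ≤ Cb ‖Q‖ * (‖q‖ ^ (k * (k + 1)) * ‖z‖ ^ k) := by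
    intro N k
    rw [F, norm_mul, norm_mul, norm_mul, norm_zpow, norm_zpow, norm_zpow, norm_neg, norm_one,
      one_zpow, one_mul]
    rw [← mul_assoc]
    exact mul_le_mul_of_nonneg_right
      (mul_le_mul_of_nonneg_right (norm_Gk_le hq2 N k) (zpow_nonneg (norm_nonneg q) _))
      (zpow_nonneg (norm_nonneg z) _) |>.trans (le_of_eq (by ring))
  have hsumb : Summable (fun k : ℤ => Cb ‖Q‖ * (‖q‖ ^ (k * (k + 1)) * ‖z‖ ^ k)) :=
    (summable_bound ‖q‖ ‖z‖ hqn hq hzn).mul_left _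
  have htend : ∀ k : ℤ, Tendsto (fun N => F q z N k) atTop
      (nhds ((-1 : ℂ) ^ k * P1⁻¹ * q ^ (k * (k + 1)) * z ^ k)) := by
    intro k
    exact (((tendsto_Gk hq2 k).const_mul ((-1 : ℂ) ^ k)).mul_const
      (q ^ (k * (k + 1)))).mul_const (z ^ k)
  have tann := tendsto_tsum_of_dominated_convergence hsumb htend
    (Eventually.of_forall fun N => hb N)
  -- product side
  have hprod : Tendsto (fun N =>
      (∏ j ∈ range N, (1 - z * Q ^ (j + 1))) * (∏ j ∈ range N, (1 - z⁻¹ * Q ^ j))) atTop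
      (nhds ((∏' n : ℕ, (1 - z * Q * Q ^ n)) * (∏' n : ℕ, (1 - z⁻¹ * Q ^ n)))) := by
    apply Tendsto.mul _ (tendsto_prod_one_sub z⁻¹ Q hq2)
    apply (tendsto_prod_one_sub (z * Q) Q hq2).congr
    intro N
    exact Finset.prod_congr rfl fun j _ => by rw [pow_succ', ← mul_assoc]
  have huniq := tendsto_nhds_unique (hprod.congr fun N => cauchy hq2 hq0 hz N) tann
  have hL : ∑' k : ℤ, ((-1 : ℂ) ^ k * P1⁻¹ * q ^ (k * (k + 1)) * z ^ k)
      = P1⁻¹ * ∑' k : ℤ, ((-1 : ℂ) ^ k * q ^ (k * (k + 1)) * z ^ k) := by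
    rw [← tsum_mul_left]
    exact tsum_congr fun k => by ring
  rw [hL] at huniq
  calc ∑' k : ℤ, ((-1 : ℂ) ^ k * q ^ (k * (k + 1)) * z ^ k)
      = P1 * (P1⁻¹ * ∑' k : ℤ, ((-1 : ℂ) ^ k * q ^ (k * (k + 1)) * z ^ k)) := by
        rw [← mul_assoc, mul_inv_cancel₀ hP1, one_mul]
    _ = P1 * ((∏' n : ℕ, (1 - z * Q * Q ^ n)) * (∏' n : ℕ, (1 - z⁻¹ * Q ^ n))) := by
        rw [← huniq]

end JTP

open JTP Complex Real




set_option maxHeartbeats 1600000 in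
/-- Product formula for `θ₁`: with `Im τ > 0`, `q = e^{πiτ}`,
`θ₁(v|τ) = -i Σ_{k∈ℤ} (-1)^k q^{(k+1/2)²} e^{(2k+1)πiv}
 = 2 q^{1/4} sin(πv) (q²;q²)_∞ (q² e^{2πiv};q²)_∞ (q² e^{-2πiv};q²)_∞`. -/
theorem stmt_13 (τ v q : ℂ) (hτ : 0 < τ.im)
    (hq : q = Complex.exp (Real.pi * Complex.I * τ)) :
    -Complex.I * ∑' k : ℤ, (-1 : ℂ) ^ k *
        Complex.exp (Real.pi * Complex.I * τ * ((k : ℂ) + 1 / 2) ^ 2) *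
        Complex.exp ((2 * (k : ℂ) + 1) * Real.pi * Complex.I * v) =
      2 * Complex.exp (Real.pi * Complex.I * τ / 4) * Complex.sin (Real.pi * v) *
      (∏' k : ℕ, (1 - q ^ 2 * (q ^ 2) ^ k)) *
      (∏' k : ℕ, (1 - q ^ 2 * Complex.exp (2 * Real.pi * Complex.I * v) * (q ^ 2) ^ k)) *
      (∏' k : ℕ, (1 - q ^ 2 * Complex.exp (-(2 * Real.pi * Complex.I * v)) * (q ^ 2) ^ k)) := by
  have hq0 : q ≠ 0 := hq ▸ Complex.exp_ne_zero _
  have hqn : ‖q‖ < 1 := by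
    rw [hq, Complex.norm_exp]
    have hre : (↑Real.pi * Complex.I * τ).re = -(Real.pi * τ.im) := by
      simp [Complex.mul_re, Complex.mul_im]
    rw [hre]
    calc Real.exp (-(Real.pi * τ.im)) < Real.exp 0 := by
          apply Real.exp_lt_exp.2
          have := Real.pi_pos
          nlinarith
      _ = 1 := Real.exp_zero
  have hq2 : ‖(q : ℂ) ^ 2‖ < 1 := by
    rw [norm_pow]
    exact pow_lt_one₀ (norm_nonneg q) hqn two_ne_zero
  set z := Complex.exp (2 * Real.pi * Complex.I * v) with hzdef
  set w := Complex.exp (Real.pi * Complex.I * v) with hwdef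
  have hz : z ≠ 0 := Complex.exp_ne_zero _
  set C := Complex.exp (Real.pi * Complex.I * τ / 4) with hCdef
  -- rewrite each summand
  have hterm : ∀ k : ℤ, (-1 : ℂ) ^ k *
      Complex.exp (Real.pi * Complex.I * τ * ((k : ℂ) + 1 / 2) ^ 2) *
      Complex.exp ((2 * (k : ℂ) + 1) * Real.pi * Complex.I * v)
      = (C * w) * ((-1 : ℂ) ^ k * q ^ (k * (k + 1)) * z ^ k) := by
    intro k
    have hA : Complex.exp (Real.pi * Complex.I * τ * ((k : ℂ) + 1 / 2) ^ 2)
        = q ^ (k * (k + 1)) * C := by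
      rw [show (Real.pi * Complex.I * τ * ((k : ℂ) + 1 / 2) ^ 2 : ℂ)
          = ((k * (k + 1) : ℤ) : ℂ) * (Real.pi * Complex.I * τ) + Real.pi * Complex.I * τ / 4
          by push_cast; ring,
        Complex.exp_add, Complex.exp_int_mul, ← hq, hCdef]
    have hB : Complex.exp ((2 * (k : ℂ) + 1) * Real.pi * Complex.I * v) = z ^ k * w := by
      rw [show ((2 * (k : ℂ) + 1) * Real.pi * Complex.I * v : ℂ)
          = ((k : ℤ) : ℂ) * (2 * Real.pi * Complex.I * v) + Real.pi * Complex.I * v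
          by push_cast; ring,
        Complex.exp_add, Complex.exp_int_mul, ← hzdef, ← hwdef]
    rw [hA, hB]
    ring
  rw [tsum_congr hterm, tsum_mul_left, jtp_core q z hqn hq0 hz]
  -- split off the (1 - z⁻¹) factor of the third product
  have hmul3 : Multipliable (fun n : ℕ => 1 - z⁻¹ * (q ^ 2) ^ (n + 1)) := by
    have h := multipliable_one_sub (z⁻¹ * q ^ 2) (q ^ 2) hq2
    apply h.congr
    intro n
    rw [pow_succ']
    ring
  have hsplit : (∏' n : ℕ, (1 - z⁻¹ * (q ^ 2) ^ n))
      = (1 - z⁻¹) * ∏' n : ℕ, (1 - z⁻¹ * (q ^ 2) ^ (n + 1)) := by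
    rw [tprod_eq_zero_mul' (f := fun n : ℕ => 1 - z⁻¹ * (q ^ 2) ^ n) hmul3]
    norm_num
  have h3eq : (∏' n : ℕ, (1 - z⁻¹ * (q ^ 2) ^ (n + 1)))
      = ∏' k : ℕ, (1 - q ^ 2 * Complex.exp (-(2 * Real.pi * Complex.I * v)) * (q ^ 2) ^ k) := by
    apply tprod_congr
    intro n
    rw [Complex.exp_neg, ← hzdef, pow_succ']
    ring
  have h2eq : (∏' n : ℕ, (1 - z * (q ^ 2) * (q ^ 2) ^ n))
      = ∏' k : ℕ, (1 - q ^ 2 * Complex.exp (2 * Real.pi * Complex.I * v) * (q ^ 2) ^ k) := by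
    apply tprod_congr
    intro n
    rw [← hzdef]
    ring
  rw [hsplit, h3eq, h2eq]
  -- the sine identity
  have hwz : w * z⁻¹ = Complex.exp (-(Real.pi * v) * Complex.I) := by
    rw [← Complex.exp_neg, ← Complex.exp_add]
    congr 1
    ring
  have hw2 : w = Complex.exp ((Real.pi * v) * Complex.I) := by
    rw [hwdef]
    congr 1
    ring
  have hsin : 2 * Complex.sin (Real.pi * v) = -Complex.I * (w * (1 - z⁻¹)) := by
    rw [Complex.two_sin, ← hwz, ← hw2]
    ring
  calc -Complex.I * (C * w *
        ((∏' k : ℕ, (1 - q ^ 2 * (q ^ 2) ^ k)) *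
          ((∏' k : ℕ, (1 - q ^ 2 * Complex.exp (2 * Real.pi * Complex.I * v) * (q ^ 2) ^ k)) *
            ((1 - z⁻¹) *
              ∏' k : ℕ, (1 - q ^ 2 * Complex.exp (-(2 * Real.pi * Complex.I * v)) * (q ^ 2) ^ k)))))
      = (-Complex.I * (w * (1 - z⁻¹))) * C *
          ((∏' k : ℕ, (1 - q ^ 2 * (q ^ 2) ^ k)) *
          ((∏' k : ℕ, (1 - q ^ 2 * Complex.exp (2 * Real.pi * Complex.I * v) * (q ^ 2) ^ k)) *
            (∏' k : ℕ, (1 - q ^ 2 * Complex.exp (-(2 * Real.pi * Complex.I * v)) * (q ^ 2) ^ k)))) := by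
        ring
    _ = _ := by
        rw [← hsin]
        ring
end

section
/- Asymptotics of θ₃ under admissible scaling: let (λ_n) be an admissible scale, ℓ > 0, v ∈ ℝ. Then θ₃(e^{-2πv}; e^{-πℓ/λ_n}) = √(λ_n/ℓ) e^{πλ_n v²/ℓ} (1 + O(e^{-πλ_n/ℓ})) as n → ∞, uniformly for all v ∈ ℝ, where θ₃(z;q) = Σ_{k∈ℤ} q^{k²} z^k. -/
/-!
With `T = λ_n / ℓ` the sum is `θ₂(iv, i/T)`. Jacobi's imaginary transformation turns it into
`√T e^{πTv²} θ₂(Tv, iT)`, and for a real first argument every term of `θ₂(u, iT) - 1` is bounded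
by `e^{-πT|k|}`, so `|θ₂(u, iT) - 1| ≤ 2e^{-πT} / (1 - e^{-πT})` uniformly in `u`. Finally
`λ_n / log n → ∞` forces `T → ∞`, so eventually `T ≥ 1` and `C = 2 / (1 - e^{-π})` works.
-/

open Filter Real

lemma norm_tsum_sub_apply_zero_le_of_norm_le_pow_natAbs {E : Type*} [NormedAddCommGroup E]
    [CompleteSpace E] {f : ℤ → E} {y : ℝ} (hy₀ : 0 ≤ y) (hy₁ : y < 1)
    (hf : ∀ n, ‖f n‖ ≤ y ^ n.natAbs) :
    ‖∑' n, f n - f 0‖ ≤ 2 / (1 - y) * y := by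
  have hgeom : HasSum (fun n : ℕ ↦ y ^ (n + 1)) (y / (1 - y)) := by
    simpa only [pow_succ', div_eq_mul_inv] using
      (hasSum_geometric_of_lt_one hy₀ hy₁).mul_left y
  have hpos (n : ℕ) : ‖f (n + 1)‖ ≤ y ^ (n + 1) := by
    simpa only [show ((n : ℤ) + 1).natAbs = n + 1 by omega] using hf (n + 1)
  have hneg (n : ℕ) : ‖f (-(n + 1))‖ ≤ y ^ (n + 1) := by
    simpa only [show (-((n : ℤ) + 1)).natAbs = n + 1 by omega] using hf (-(n + 1))
  rw [tsum_of_add_one_of_neg_add_one (.of_norm_bounded hgeom.summable hpos)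
    (.of_norm_bounded hgeom.summable hneg), add_right_comm _ (f 0), add_sub_cancel_right]
  calc ‖∑' n : ℕ, f (n + 1) + ∑' n : ℕ, f (-(n + 1))‖
      ≤ y / (1 - y) + y / (1 - y) :=
        (norm_add_le _ _).trans (add_le_add (tsum_of_norm_bounded hgeom hpos)
          (tsum_of_norm_bounded hgeom hneg))
    _ = 2 / (1 - y) * y := by ring

section Theta

open Complex

lemma norm_jacobiTheta₂_term_le_of_im_eq_zero {z τ : ℂ} (hz : z.im = 0) (hτ : 0 ≤ τ.im) (n : ℤ) :
    ‖jacobiTheta₂_term n z τ‖ ≤ rexp (-π * τ.im) ^ n.natAbs := by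
  rw [norm_jacobiTheta₂_term, hz, ← Real.exp_nat_mul, Real.exp_le_exp]
  have habs : (n.natAbs : ℝ) ≤ (n : ℝ) ^ 2 := by
    rw [Nat.cast_natAbs]; exact_mod_cast Int.natAbs_le_self_sq n
  have := mul_le_mul_of_nonneg_left habs (mul_nonneg pi_pos.le hτ)
  linarith

theorem norm_jacobiTheta₂_sub_one_le_of_im_eq_zero {z τ : ℂ} (hz : z.im = 0) (hτ : 0 < τ.im) :
    ‖jacobiTheta₂ z τ - 1‖ ≤ 2 / (1 - rexp (-π * τ.im)) * rexp (-π * τ.im) := by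
  have hterm₀ : jacobiTheta₂_term 0 z τ = 1 := by simp [jacobiTheta₂_term]
  rw [jacobiTheta₂, ← hterm₀]
  exact norm_tsum_sub_apply_zero_le_of_norm_le_pow_natAbs (Real.exp_pos _).le
    (Real.exp_lt_one_iff.mpr (by nlinarith [pi_pos]))
    (norm_jacobiTheta₂_term_le_of_im_eq_zero hz hτ.le)

lemma ofReal_tsum_theta_eq_jacobiTheta₂ (T v : ℝ) :
    ((∑' k : ℤ, rexp (-π / T) ^ (k ^ 2) * rexp (-2 * π * v) ^ k : ℝ) : ℂ) =
      jacobiTheta₂ (v * I) (I / T) := by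
  rw [ofReal_tsum, jacobiTheta₂]
  refine tsum_congr fun k ↦ ?_
  rw [jacobiTheta₂_term]
  push_cast
  rw [← exp_int_mul, ← exp_int_mul, ← Complex.exp_add]
  congr 1
  push_cast
  linear_combination (-(2 * π * k * v) - π * k ^ 2 / T) * I_sq

lemma jacobiTheta₂_functional_equation_imaginary {T : ℝ} (hT : 0 < T) (v : ℝ) :
    jacobiTheta₂ (v * I) (I / T) = √T * rexp (π * T * v ^ 2) * jacobiTheta₂ (T * v) (T * I) := by
  have hT' : (T : ℂ) ≠ 0 := ofReal_ne_zero.mpr hT.ne'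
  have hsqrt : 1 / (-I * (I / T)) ^ (1 / 2 : ℂ) = √T := by
    rw [show -I * (I / T) = ((T⁻¹ : ℝ) : ℂ) by push_cast; field_simp; rw [I_sq]; ring,
      show (1 / 2 : ℂ) = ((1 / 2 : ℝ) : ℂ) by norm_num, ← ofReal_cpow (by positivity),
      ← Real.sqrt_eq_rpow, Real.sqrt_inv]
    push_cast
    rw [one_div, inv_inv]
  rw [jacobiTheta₂_functional_equation, hsqrt]
  congr 2
  · rw [ofReal_exp]
    congr 1
    field_simp
    push_cast
    linear_combination -π * T * v ^ 2 * I_sq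
  · field_simp
  · field_simp
    linear_combination -I_sq

theorem abs_tsum_theta_sub_le {T₀ T : ℝ} (hT₀ : 0 < T₀) (hT : T₀ ≤ T) (v : ℝ) :
    |∑' k : ℤ, rexp (-π / T) ^ (k ^ 2) * rexp (-2 * π * v) ^ k - √T * rexp (π * T * v ^ 2)| ≤
      √T * rexp (π * T * v ^ 2) * (2 / (1 - rexp (-π * T₀)) * rexp (-π * T)) := by
  have hT' : 0 < T := hT₀.trans_le hT
  have hθ := norm_jacobiTheta₂_sub_one_le_of_im_eq_zero (z := T * v) (τ := T * I) (by simp)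
    (by simpa using hT')
  rw [show (T * I : ℂ).im = T by simp] at hθ
  rw [← Real.norm_eq_abs, ← norm_real, ofReal_sub, ofReal_tsum_theta_eq_jacobiTheta₂,
    jacobiTheta₂_functional_equation_imaginary hT', ofReal_mul, ← mul_sub_one, norm_mul, norm_mul,
    norm_real, norm_real, Real.norm_of_nonneg (Real.sqrt_nonneg T),
    Real.norm_of_nonneg (Real.exp_pos _).le]
  gcongr
  refine hθ.trans ?_
  have hexp : rexp (-π * T) ≤ rexp (-π * T₀) := Real.exp_le_exp.mpr (by nlinarith [pi_pos])
  have hexp₀ : rexp (-π * T₀) < 1 := Real.exp_lt_one_iff.mpr (by nlinarith [pi_pos])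
  gcongr

end Theta

lemma tendsto_atTop_of_tendsto_div_log {f : ℕ → ℝ}
    (hf : Tendsto (fun n : ℕ => f n / Real.log n) atTop atTop) : Tendsto f atTop atTop := by
  have hlog : Tendsto (fun n : ℕ => Real.log n) atTop atTop :=
    Real.tendsto_log_atTop.comp tendsto_natCast_atTop_atTop
  refine (hf.atTop_mul_atTop₀ hlog).congr' ?_
  filter_upwards [hlog.eventually_gt_atTop 0] with n hn
  exact div_mul_cancel₀ _ hn.ne'

theorem stmt_15_general (lam : ℕ → ℝ)
    (h1 : Tendsto (fun n : ℕ => lam n / Real.log n) atTop atTop)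
    (l : ℝ) (hl : 0 < l) :
    ∃ C : ℝ, ∃ N : ℕ, ∀ n ≥ N, ∀ v : ℝ,
      |(∑' k : ℤ, Real.exp (-Real.pi * l / lam n) ^ (k ^ 2) * Real.exp (-2 * Real.pi * v) ^ k) -
          Real.sqrt (lam n / l) * Real.exp (Real.pi * lam n * v ^ 2 / l)| ≤
        Real.sqrt (lam n / l) * Real.exp (Real.pi * lam n * v ^ 2 / l) *
          (C * Real.exp (-Real.pi * lam n / l)) := by
  have hT : Tendsto (fun n ↦ lam n / l) atTop atTop :=
    (tendsto_atTop_of_tendsto_div_log h1).atTop_div_const hl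
  obtain ⟨N, hN⟩ := eventually_atTop.mp (hT.eventually_ge_atTop 1)
  refine ⟨2 / (1 - rexp (-π * 1)), N, fun n hn v ↦ ?_⟩
  have hθ := abs_tsum_theta_sub_le one_pos (hN n hn) v
  rwa [div_div_eq_mul_div,
    show π * (lam n / l) * v ^ 2 = π * lam n * v ^ 2 / l by ring,
    show -π * (lam n / l) = -π * lam n / l by ring] at hθ

/-- Asymptotics of `θ₃` under admissible scaling: for an admissible scale `(λ_n)`,
`ℓ > 0`, one has `θ₃(e^{-2πv}; e^{-πℓ/λ_n}) = √(λ_n/ℓ) e^{πλ_n v²/ℓ} (1 + O(e^{-πλ_n/ℓ}))`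
as `n → ∞`, uniformly for all `v ∈ ℝ`, where `θ₃(z;q) = Σ_{k∈ℤ} q^{k²} z^k`. -/
theorem stmt_15 (lam : ℕ → ℝ) (hpos : ∀ n, 0 < lam n)
    (h1 : Tendsto (fun n : ℕ => lam n / Real.log n) atTop atTop)
    (h2 : Tendsto (fun n : ℕ => (n : ℝ) / (lam n) ^ 2) atTop atTop)
    (l : ℝ) (hl : 0 < l) :
    ∃ C : ℝ, ∃ N : ℕ, ∀ n ≥ N, ∀ v : ℝ,
      |(∑' k : ℤ, Real.exp (-Real.pi * l / lam n) ^ (k ^ 2) * Real.exp (-2 * Real.pi * v) ^ k) -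
          Real.sqrt (lam n / l) * Real.exp (Real.pi * lam n * v ^ 2 / l)| ≤
        Real.sqrt (lam n / l) * Real.exp (Real.pi * lam n * v ^ 2 / l) *
          (C * Real.exp (-Real.pi * lam n / l)) :=
  stmt_15_general lam h1 l hl
end

section
/- For 0 < q < 1, z ∈ ℂ with z ≠ 0, and ℓ > 0, the function g(z;q) = Σ_{k=0}^∞ (q^{k+1}; q)_∞ q^{ℓk²} (-z)^k satisfies, for each n ∈ ℕ, g(q^{-4nℓ} z; q) = z^{2n} q^{-4n²ℓ} [θ₄(z^{-1}; q^ℓ) + r(n)] where |r(n)| ≤ 8 θ₃(|z|^{-1}; q^ℓ) [q^{n+1}/(1-q) + q^{ℓn²}/|z|^n] for n sufficiently large. -/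
/-!
Put `Q = q^ℓ`. Substituting `w = Q^{-4n} z` and shifting the index `k = 2n - m` gives
`g(w) = z^{2n} Q^{-4n²} Σ_m (q^{2n-m+1};q)_∞ (-1)^m Q^{m²} z^{-m}`, where `m` may run over all
of `ℤ` because `(q^{k+1};q)_∞` has the factor `1 - q⁰ = 0` when `k < 0`. So `r(n)` is the same
series with coefficients `(q^{2n-m+1};q)_∞ - 1`. These are at most `q^{n+1}/(1-q)` in absolute
value for `m ≤ n`, and at most `1` for `m > n`. The first range contributes at most
`q^{n+1}/(1-q) · θ₃(|z|⁻¹;Q)`. Once `Q^{2n} ≤ |z|/2`, the tail `Σ_{m>n} Q^{m²}|z|^{-m}` is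
dominated by a geometric series with sum `Q^{n²}|z|^{-n}`.
-/

open Complex Real Filter Function

theorem Finset.one_sub_sum_le_prod_one_sub {ι : Type*} [LinearOrder ι] (s : Finset ι)
    {x : ι → ℝ} (h0 : ∀ i ∈ s, 0 ≤ x i) (h1 : ∀ i ∈ s, x i ≤ 1) :
    1 - ∑ i ∈ s, x i ≤ ∏ i ∈ s, (1 - x i) := by
  rw [Finset.prod_one_sub_ordered]
  gcongr with i hi
  refine mul_le_of_le_one_right (h0 i hi) (Finset.prod_le_one (fun j hj => ?_) fun j hj => ?_)
  · linarith [h1 j (Finset.mem_filter.1 hj).1]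
  · linarith [h0 j (Finset.mem_filter.1 hj).1]

lemma mul_pow_mem_Icc {a q : ℝ} (ha0 : 0 ≤ a) (ha1 : a ≤ 1) (hq0 : 0 ≤ q) (hq1 : q ≤ 1)
    (j : ℕ) : a * q ^ j ∈ Set.Icc 0 1 :=
  ⟨by positivity, mul_le_one₀ ha1 (by positivity) (pow_le_one₀ hq0 hq1)⟩

noncomputable def qPochhammerInf (a q : ℝ) : ℝ := ∏' j : ℕ, (1 - a * q ^ j)

namespace qPochhammerInf

variable {q : ℝ}

lemma hasProd (a : ℝ) (hq : |q| < 1) :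
    HasProd (fun j : ℕ => 1 - a * q ^ j) (qPochhammerInf a q) := by
  have h := Real.multipliable_one_add_of_summable
    ((summable_geometric_of_abs_lt_one hq).mul_left a).neg
  simp only [← sub_eq_add_neg] at h
  exact h.hasProd

lemma eq_zero_of_mul_pow_eq_one {a : ℝ} {j : ℕ} (h : a * q ^ j = 1) : qPochhammerInf a q = 0 :=
  tprod_of_exists_eq_zero ⟨j, by rw [h, sub_self]⟩

section Bounds

variable {a : ℝ} (ha0 : 0 ≤ a) (ha1 : a ≤ 1) (hq0 : 0 ≤ q) (hq1 : q < 1)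
include ha0 ha1 hq0 hq1

lemma nonneg : 0 ≤ qPochhammerInf a q :=
  (hasProd a (abs_lt.2 ⟨by linarith, hq1⟩)).nonneg fun j =>
    sub_nonneg.2 (mul_pow_mem_Icc ha0 ha1 hq0 hq1.le j).2

lemma le_one : qPochhammerInf a q ≤ 1 :=
  hasProd_le_of_prod_le (hasProd a (abs_lt.2 ⟨by linarith, hq1⟩)) fun s =>
    Finset.prod_le_one (fun j _ => sub_nonneg.2 (mul_pow_mem_Icc ha0 ha1 hq0 hq1.le j).2)
      fun j _ => sub_le_self _ (mul_pow_mem_Icc ha0 ha1 hq0 hq1.le j).1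

lemma one_sub_le : 1 - qPochhammerInf a q ≤ a / (1 - q) := by
  have hsum : HasSum (fun j : ℕ => a * q ^ j) (a / (1 - q)) := by
    simpa [div_eq_mul_inv] using (hasSum_geometric_of_lt_one hq0 hq1).mul_left a
  have : 1 - a / (1 - q) ≤ qPochhammerInf a q :=
    le_hasProd_of_le_prod (hasProd a (abs_lt.2 ⟨by linarith, hq1⟩)) fun s =>
      calc 1 - a / (1 - q) ≤ 1 - ∑ j ∈ s, a * q ^ j := by
            gcongr
            exact sum_le_hasSum s (fun j _ => (mul_pow_mem_Icc ha0 ha1 hq0 hq1.le j).1) hsum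
        _ ≤ ∏ j ∈ s, (1 - a * q ^ j) :=
          Finset.one_sub_sum_le_prod_one_sub s
            (fun j _ => (mul_pow_mem_Icc ha0 ha1 hq0 hq1.le j).1)
            fun j _ => (mul_pow_mem_Icc ha0 ha1 hq0 hq1.le j).2
  linarith

end Bounds

end qPochhammerInf

lemma ofReal_qPochhammerInf {a q : ℝ} (hq : |q| < 1) :
    (qPochhammerInf a q : ℂ) = ∏' j : ℕ, (1 - (a : ℂ) * (q : ℂ) ^ j) := by
  have h := (qPochhammerInf.hasProd a hq).map Complex.ofRealHom Complex.continuous_ofReal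
  simpa [Function.comp_def] using h.tprod_eq.symm

section ShiftedPochhammer

variable {q : ℝ}

lemma qPochhammerInf_zpow_add_one_of_neg (hq : q ≠ 0) {k : ℤ} (hk : k < 0) :
    qPochhammerInf (q ^ (k + 1)) q = 0 :=
  qPochhammerInf.eq_zero_of_mul_pow_eq_one (j := (-(k + 1)).toNat) (by
    rw [← zpow_natCast, ← zpow_add₀ hq, Int.toNat_of_nonneg (by omega), add_neg_cancel,
      zpow_zero])

variable (hq0 : 0 < q) (hq1 : q < 1)
include hq0 hq1

lemma ofReal_qPochhammerInf_zpow_natCast_add_one (k : ℕ) :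
    (qPochhammerInf (q ^ ((k : ℤ) + 1)) q : ℂ) = ∏' j : ℕ, (1 - (q : ℂ) ^ (k + 1 + j)) := by
  norm_cast
  rw [ofReal_qPochhammerInf (abs_lt.2 ⟨by linarith, hq1⟩)]
  simp [pow_add]

lemma qPochhammerInf_pow_succ_mem_Icc (k : ℕ) : qPochhammerInf (q ^ (k + 1)) q ∈ Set.Icc 0 1 :=
  have ha1 : q ^ (k + 1) ≤ 1 := pow_le_one₀ hq0.le hq1.le
  ⟨qPochhammerInf.nonneg (by positivity) ha1 hq0.le hq1,
    qPochhammerInf.le_one (by positivity) ha1 hq0.le hq1⟩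

lemma abs_qPochhammerInf_pow_succ_sub_one_le (k : ℕ) :
    |qPochhammerInf (q ^ (k + 1)) q - 1| ≤ q ^ (k + 1) / (1 - q) := by
  rw [abs_of_nonpos (sub_nonpos.2 (qPochhammerInf_pow_succ_mem_Icc hq0 hq1 k).2)]
  linarith [qPochhammerInf.one_sub_le (pow_pos hq0 (k + 1)).le (pow_le_one₀ hq0.le hq1.le)
    hq0.le hq1]

lemma abs_qPochhammerInf_zpow_add_one_sub_one_le_one (k : ℤ) :
    |qPochhammerInf (q ^ (k + 1)) q - 1| ≤ 1 := by
  rcases lt_or_ge k 0 with hk | hk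
  · simp [qPochhammerInf_zpow_add_one_of_neg hq0.ne' hk]
  · lift k to ℕ using hk
    have := qPochhammerInf_pow_succ_mem_Icc hq0 hq1 k
    norm_cast
    exact abs_le.2 ⟨by linarith [this.1], by linarith [this.2]⟩

lemma abs_qPochhammerInf_zpow_sub_one_le_add_indicator (n : ℕ) (m : ℤ) :
    |qPochhammerInf (q ^ (2 * n - m + 1)) q - 1| ≤
      q ^ (n + 1) / (1 - q) + {m : ℤ | n < m}.indicator 1 m := by
  by_cases hm : (n : ℤ) < m
  · have hε : 0 ≤ q ^ (n + 1) / (1 - q) := div_nonneg (by positivity) (by linarith)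
    simpa [hm] using (abs_qPochhammerInf_zpow_add_one_sub_one_le_one hq0 hq1 _).trans
      (le_add_of_nonneg_left hε)
  · obtain ⟨k, hk⟩ : ∃ k : ℕ, 2 * (n : ℤ) - m = k := ⟨(2 * n - m).toNat, by omega⟩
    rw [Set.indicator_of_notMem (s := {m : ℤ | n < m}) hm, add_zero, hk]
    norm_cast
    refine (abs_qPochhammerInf_pow_succ_sub_one_le hq0 hq1 k).trans ?_
    exact div_le_div_of_nonneg_right (pow_le_pow_of_le_one hq0.le hq1.le (by omega))
      (by linarith)

end ShiftedPochhammer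

section ThetaSeries

variable {Q d : ℝ}

lemma summable_pow_sq_mul_pow_s18 (hQ0 : 0 ≤ Q) (hQ1 : Q < 1) (d : ℝ) :
    Summable fun n : ℕ => Q ^ (n ^ 2) * d ^ n := by
  have hlim : Tendsto (fun n : ℕ => Q ^ n * |d|) atTop (nhds 0) := by
    simpa using (tendsto_pow_atTop_nhds_zero_of_lt_one hQ0 hQ1).mul_const |d|
  refine Summable.of_norm_bounded_eventually_nat summable_geometric_two ?_
  filter_upwards [hlim.eventually_le_const (show (0 : ℝ) < 1 / 2 by norm_num)] with n hn
  calc ‖Q ^ (n ^ 2) * d ^ n‖ = (Q ^ n * |d|) ^ n := by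
        rw [norm_mul, norm_pow, norm_pow, Real.norm_eq_abs, abs_of_nonneg hQ0,
          Real.norm_eq_abs, mul_pow, ← pow_mul, sq]
    _ ≤ (1 / 2) ^ n := pow_le_pow_left₀ (by positivity) hn n

lemma summable_zpow_sq_mul_zpow (hQ0 : 0 ≤ Q) (hQ1 : Q < 1) (d : ℝ) :
    Summable fun m : ℤ => Q ^ (m ^ 2) * d ^ m := by
  refine Summable.of_nat_of_neg ?_ ?_
  · simpa [← zpow_natCast] using summable_pow_sq_mul_pow_s18 hQ0 hQ1 d
  · simpa [← zpow_natCast, zpow_neg, inv_pow] using summable_pow_sq_mul_pow_s18 hQ0 hQ1 d⁻¹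

lemma one_le_tsum_zpow_sq_mul_zpow (hQ0 : 0 ≤ Q) (hQ1 : Q < 1) (hd : 0 ≤ d) :
    1 ≤ ∑' m : ℤ, Q ^ (m ^ 2) * d ^ m := by
  simpa using (summable_zpow_sq_mul_zpow hQ0 hQ1 d).le_tsum 0 fun m _ => by positivity

lemma pow_sq_mul_pow_add_le (hQ0 : 0 ≤ Q) (hQ1 : Q ≤ 1) (hd : 0 ≤ d) (n i : ℕ) :
    Q ^ ((n + i) ^ 2) * d ^ (n + i) ≤ Q ^ (n ^ 2) * d ^ n * (Q ^ (2 * n) * d) ^ i :=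
  calc Q ^ ((n + i) ^ 2) * d ^ (n + i) ≤ Q ^ (n ^ 2 + 2 * n * i) * d ^ (n + i) := by
        have : n ^ 2 + 2 * n * i ≤ (n + i) ^ 2 := by ring_nf; omega
        exact mul_le_mul_of_nonneg_right (pow_le_pow_of_le_one hQ0 hQ1 this) (by positivity)
    _ = Q ^ (n ^ 2) * d ^ n * (Q ^ (2 * n) * d) ^ i := by ring

lemma tsum_indicator_lt_pow_sq_mul_pow_le (hQ0 : 0 ≤ Q) (hQ1 : Q ≤ 1) (hd : 0 ≤ d) {n : ℕ}
    (hn : Q ^ (2 * n) * d ≤ 1 / 2) :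
    ∑' m : ℤ, {m : ℤ | n < m}.indicator (fun m => Q ^ (m ^ 2) * d ^ m) m ≤
      Q ^ (n ^ 2) * d ^ n := by
  set a := Q ^ (n ^ 2) * d ^ n
  have hbound : ∀ i : ℕ, Q ^ ((n + (i + 1)) ^ 2) * d ^ (n + (i + 1)) ≤ a / 2 / 2 ^ i := by
    intro i
    refine (pow_sq_mul_pow_add_le hQ0 hQ1 hd n (i + 1)).trans ?_
    calc a * (Q ^ (2 * n) * d) ^ (i + 1) ≤ a * (1 / 2) ^ (i + 1) := by gcongr
      _ = a / 2 / 2 ^ i := by rw [one_div, inv_pow, pow_succ]; ring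
  have hgeom := hasSum_geometric_two' a
  have hsum := hgeom.summable.of_nonneg_of_le (fun i => by positivity) hbound
  have hinj : Injective fun i : ℕ => ((n + (i + 1) : ℕ) : ℤ) := fun i j h => by
    simp only [Nat.cast_inj] at h; omega
  rw [← hinj.tsum_eq]
  · simpa [show ∀ i : ℕ, (n : ℤ) < n + (i + 1) by intro i; omega, ← zpow_natCast]
      using hasSum_le hbound hsum.hasSum hgeom
  · intro m hm
    have : (n : ℤ) < m := by by_contra h; exact hm (Set.indicator_of_notMem h _)
    exact ⟨(m - n - 1).toNat, by push_cast; omega⟩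

lemma norm_neg_one_zpow_mul_zpow_sq_mul_zpow (Q : ℝ) (x : ℂ) (m : ℤ) :
    ‖(-1) ^ m * (Q : ℂ) ^ (m ^ 2) * x ^ m‖ = |Q| ^ (m ^ 2) * ‖x‖ ^ m := by
  simp

lemma summable_norm_neg_one_zpow_mul_zpow_sq_mul_zpow (hQ0 : 0 ≤ Q) (hQ1 : Q < 1) (x : ℂ) :
    Summable fun m : ℤ => ‖(-1) ^ m * (Q : ℂ) ^ (m ^ 2) * x ^ m‖ := by
  simpa only [norm_neg_one_zpow_mul_zpow_sq_mul_zpow, abs_of_nonneg hQ0] using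
    summable_zpow_sq_mul_zpow hQ0 hQ1 ‖x‖

end ThetaSeries

lemma norm_tsum_mul_le_of_norm_le_add_indicator {ι 𝕜 : Type*} [NormedField 𝕜] [CompleteSpace 𝕜]
    {b F : ι → 𝕜} {s : Set ι} {ε : ℝ} (hF : Summable fun i => ‖F i‖)
    (hb : ∀ i, ‖b i‖ ≤ ε + s.indicator 1 i) :
    ‖∑' i, b i * F i‖ ≤ ε * ∑' i, ‖F i‖ + ∑' i, s.indicator (fun i => ‖F i‖) i := by
  have hpoint : ∀ i, ‖b i * F i‖ ≤ ε * ‖F i‖ + s.indicator (fun i => ‖F i‖) i := fun i =>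
    calc ‖b i * F i‖ ≤ (ε + s.indicator 1 i) * ‖F i‖ := by
          rw [norm_mul]; gcongr; exact hb i
      _ = ε * ‖F i‖ + s.indicator (fun i => ‖F i‖) i := by
          by_cases hi : i ∈ s <;> simp [hi, add_mul]
  have hmaj : Summable fun i => ε * ‖F i‖ + s.indicator (fun i => ‖F i‖) i :=
    (hF.mul_left ε).add (hF.indicator s)
  have hnorm : Summable fun i => ‖b i * F i‖ :=
    hmaj.of_nonneg_of_le (fun i => norm_nonneg _) hpoint
  calc ‖∑' i, b i * F i‖ ≤ ∑' i, ‖b i * F i‖ := norm_tsum_le_tsum_norm hnorm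
    _ ≤ ∑' i, (ε * ‖F i‖ + s.indicator (fun i => ‖F i‖) i) := hnorm.tsum_le_tsum hpoint hmaj
    _ = ε * ∑' i, ‖F i‖ + ∑' i, s.indicator (fun i => ‖F i‖) i := by
        rw [(hF.mul_left ε).tsum_add (hF.indicator s), tsum_mul_left]

lemma zpow_sq_mul_neg_zpow_mul_zpow {K : Type*} [Field K] {w z : K} (hw : w ≠ 0) (hz : z ≠ 0)
    (n : ℕ) (m : ℤ) :
    w ^ ((2 * n - m) ^ 2) * (-(w ^ (-(4 * n : ℤ)) * z)) ^ (2 * n - m) =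
      z ^ (2 * n) * w ^ (-(4 * n ^ 2 : ℤ)) * ((-1) ^ m * w ^ (m ^ 2) * z⁻¹ ^ m) := by
  have hsign : (-1 : K) ^ (2 * (n : ℤ) - m) = (-1) ^ m := by
    rw [show 2 * (n : ℤ) - m = m + ((n - m) + (n - m)) by ring, zpow_add₀ (by norm_num),
      Even.neg_one_zpow ⟨n - m, rfl⟩, mul_one]
  have hw' : w ^ ((2 * n - m) ^ 2) * w ^ (-(4 * n : ℤ) * (2 * n - m)) =
      w ^ (-(4 * n ^ 2 : ℤ)) * w ^ (m ^ 2) := by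
    rw [← zpow_add₀ hw, ← zpow_add₀ hw]; ring_nf
  rw [neg_eq_neg_one_mul, mul_zpow, mul_zpow, hsign, ← zpow_mul, inv_zpow', ← zpow_natCast,
    zpow_sub₀ hz]
  push_cast
  rw [zpow_neg z m]
  linear_combination (-1) ^ m * z ^ (2 * (n : ℤ)) * (z ^ m)⁻¹ * hw'

lemma tsum_mul_pow_sq_mul_neg_pow_eq {K : Type*} [NormedField K] {w z : K} (hw : w ≠ 0)
    (hz : z ≠ 0) {c : ℤ → K} (hc : ∀ k < 0, c k = 0) (n : ℕ) :
    ∑' k : ℕ, c k * w ^ (k ^ 2) * (-(w ^ (-(4 * n : ℤ)) * z)) ^ k =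
      z ^ (2 * n) * w ^ (-(4 * n ^ 2 : ℤ)) *
        ∑' m : ℤ, c (2 * n - m) * ((-1) ^ m * w ^ (m ^ 2) * z⁻¹ ^ m) := by
  set T : ℤ → K := fun k => c k * w ^ (k ^ 2) * (-(w ^ (-(4 * n : ℤ)) * z)) ^ k
  have hsupp : support T ⊆ Set.range ((↑) : ℕ → ℤ) := fun k hk => by
    by_contra hneg
    exact hk (by simp [T, hc k (by simpa using hneg)])
  calc ∑' k : ℕ, c k * w ^ (k ^ 2) * (-(w ^ (-(4 * n : ℤ)) * z)) ^ k
      = ∑' k : ℕ, T k := tsum_congr fun k => by simp [T, ← zpow_natCast]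
    _ = ∑' m : ℤ, T (2 * n - m) := by
        rw [Nat.cast_injective.tsum_eq hsupp, ← (Equiv.subLeft (2 * (n : ℤ))).tsum_eq T]
        rfl
    _ = _ := by
        rw [← tsum_mul_left]
        refine tsum_congr fun m => ?_
        simp only [T, mul_assoc, zpow_sq_mul_neg_zpow_mul_zpow hw hz n m]
        ring

noncomputable def gRemainder (q Q : ℝ) (z : ℂ) (n : ℕ) : ℂ :=
  ∑' m : ℤ, ((qPochhammerInf (q ^ (2 * n - m + 1)) q - 1 : ℝ) : ℂ) *
    ((-1) ^ m * (Q : ℂ) ^ (m ^ 2) * z⁻¹ ^ m)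

section Remainder

variable {q Q : ℝ} (hq0 : 0 < q) (hq1 : q < 1) (hQ0 : 0 < Q) (hQ1 : Q < 1) {z : ℂ}
include hq0 hq1 hQ0 hQ1

lemma tsum_eq_mul_theta_add_gRemainder (hz : z ≠ 0) (n : ℕ) :
    ∑' k : ℕ, (∏' j : ℕ, (1 - (q : ℂ) ^ (k + 1 + j))) * (Q : ℂ) ^ (k ^ 2) *
        (-((Q : ℂ) ^ (-(4 * n : ℤ)) * z)) ^ k =
      z ^ (2 * n) * (Q : ℂ) ^ (-(4 * n ^ 2 : ℤ)) *
        ((∑' m : ℤ, (-1) ^ m * (Q : ℂ) ^ (m ^ 2) * z⁻¹ ^ m) + gRemainder q Q z n) := by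
  have hθ := summable_norm_neg_one_zpow_mul_zpow_sq_mul_zpow hQ0.le hQ1 z⁻¹
  have hr : Summable fun m : ℤ => ((qPochhammerInf (q ^ (2 * n - m + 1)) q - 1 : ℝ) : ℂ) *
      ((-1) ^ m * (Q : ℂ) ^ (m ^ 2) * z⁻¹ ^ m) :=
    Summable.of_norm_bounded hθ fun m => by
      rw [norm_mul, norm_real, Real.norm_eq_abs]
      exact mul_le_of_le_one_left (norm_nonneg _)
        (abs_qPochhammerInf_zpow_add_one_sub_one_le_one hq0 hq1 _)
  simp_rw [← ofReal_qPochhammerInf_zpow_natCast_add_one hq0 hq1]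
  rw [tsum_mul_pow_sq_mul_neg_pow_eq (c := fun k => (qPochhammerInf (q ^ (k + 1)) q : ℂ))
      (ofReal_ne_zero.2 hQ0.ne') hz _ n, gRemainder, ← hθ.of_norm.tsum_add hr]
  · congr 1
    exact tsum_congr fun m => by push_cast; ring
  · intro k hk
    simp [qPochhammerInf_zpow_add_one_of_neg hq0.ne' hk]

lemma norm_gRemainder_le {n : ℕ} (hn : Q ^ (2 * n) * ‖z‖⁻¹ ≤ 1 / 2) :
    ‖gRemainder q Q z n‖ ≤
      q ^ (n + 1) / (1 - q) * ∑' m : ℤ, Q ^ (m ^ 2) * ‖z‖⁻¹ ^ m + Q ^ (n ^ 2) * ‖z‖⁻¹ ^ n := by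
  have hnorm : ∀ m : ℤ, ‖(-1) ^ m * (Q : ℂ) ^ (m ^ 2) * z⁻¹ ^ m‖ = Q ^ (m ^ 2) * ‖z‖⁻¹ ^ m :=
    fun m => by rw [norm_neg_one_zpow_mul_zpow_sq_mul_zpow, abs_of_pos hQ0, norm_inv]
  rw [gRemainder]
  refine (norm_tsum_mul_le_of_norm_le_add_indicator (s := {m : ℤ | n < m})
    (ε := q ^ (n + 1) / (1 - q))
    (summable_norm_neg_one_zpow_mul_zpow_sq_mul_zpow hQ0.le hQ1 z⁻¹) fun m => ?_).trans ?_
  · rw [norm_real, Real.norm_eq_abs]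
    exact abs_qPochhammerInf_zpow_sub_one_le_add_indicator hq0 hq1 n m
  · simp only [hnorm]
    gcongr
    exact tsum_indicator_lt_pow_sq_mul_pow_le hQ0.le hQ1.le (by positivity) hn

end Remainder

/-- For `0 < q < 1`, `z ≠ 0`, `ℓ > 0`, the function
`g(w;q) = Σ_{k=0}^∞ (q^{k+1};q)_∞ q^{ℓk²} (-w)^k` satisfies, for all sufficiently
large `n`, `g(q^{-4nℓ} z; q) = z^{2n} q^{-4n²ℓ} [θ₄(z⁻¹; q^ℓ) + r(n)]` with
`|r(n)| ≤ 8 θ₃(|z|⁻¹; q^ℓ) [q^{n+1}/(1-q) + q^{ℓn²}/|z|^n]`. -/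
theorem stmt_18 (q : ℝ) (hq0 : 0 < q) (hq1 : q < 1) (z : ℂ) (hz : z ≠ 0)
    (l : ℝ) (hl : 0 < l) :
    ∃ N : ℕ, ∀ n : ℕ, N ≤ n → ∃ r : ℂ,
      (∑' k : ℕ, (∏' j : ℕ, (1 - (q : ℂ) ^ (k + 1 + j))) *
          ((q ^ (l * (k : ℝ) ^ 2) : ℝ) : ℂ) *
          (-(((q ^ (-(4 * (n : ℝ) * l)) : ℝ) : ℂ) * z)) ^ k) =
        z ^ (2 * n) * ((q ^ (-(4 * (n : ℝ) ^ 2 * l)) : ℝ) : ℂ) *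
          ((∑' k : ℤ, (-1 : ℂ) ^ k * (((q ^ l : ℝ) : ℂ)) ^ (k ^ 2) * (z⁻¹) ^ k) + r) ∧
      ‖r‖ ≤ 8 * (∑' k : ℤ, (q ^ l) ^ (k ^ 2) * ((‖z‖)⁻¹) ^ k) *
        (q ^ (n + 1) / (1 - q) + q ^ (l * (n : ℝ) ^ 2) / ‖z‖ ^ n) := by
  set Q := q ^ l
  have hQ0 : 0 < Q := Real.rpow_pos_of_pos hq0 l
  have hQ1 : Q < 1 := Real.rpow_lt_one hq0.le hq1 hl
  have hQ : ∀ k : ℤ, q ^ (l * k) = Q ^ k := Real.rpow_mul_intCast hq0.le l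
  have hsq : ∀ k : ℕ, q ^ (l * (k : ℝ) ^ 2) = Q ^ (k ^ 2) := fun k => by
    rw [← Real.rpow_mul_natCast hq0.le]; push_cast; rfl
  obtain ⟨N, hN⟩ := eventually_atTop.1 <| ((tendsto_pow_atTop_nhds_zero_of_lt_one hQ0.le
    hQ1).mul_const ‖z‖⁻¹).eventually_le_const (show (0 : ℝ) * ‖z‖⁻¹ < 1 / 2 by simp)
  refine ⟨N, fun n hn => ⟨gRemainder q Q z n, ?_, ?_⟩⟩
  · have hshift : q ^ (-(4 * (n : ℝ) * l)) = Q ^ (-(4 * n : ℤ)) := by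
      rw [← hQ]; push_cast; ring_nf
    have hscale : q ^ (-(4 * (n : ℝ) ^ 2 * l)) = Q ^ (-(4 * n ^ 2 : ℤ)) := by
      rw [← hQ]; push_cast; ring_nf
    simp only [hsq, hshift, hscale, ofReal_pow, ofReal_zpow]
    exact tsum_eq_mul_theta_add_gRemainder hq0 hq1 hQ0 hQ1 hz n
  · have hΘ := one_le_tsum_zpow_sq_mul_zpow hQ0.le hQ1 (inv_nonneg.2 (norm_nonneg z))
    have hε : 0 ≤ q ^ (n + 1) / (1 - q) := div_nonneg (by positivity) (by linarith)
    have htail : 0 ≤ Q ^ (n ^ 2) * ‖z‖⁻¹ ^ n := by positivity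
    have hlast : q ^ (l * (n : ℝ) ^ 2) / ‖z‖ ^ n = Q ^ (n ^ 2) * ‖z‖⁻¹ ^ n := by
      rw [hsq, inv_pow, div_eq_mul_inv]
    rw [hlast]
    refine (norm_gRemainder_le hq0 hq1 hQ0 hQ1 (hN (2 * n) (by omega))).trans ?_
    nlinarith [mul_le_mul_of_nonneg_left hΘ hε, mul_le_mul_of_nonneg_right hΘ htail]
end
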